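/- arXiv:2211.01090 — 4 statements merged into one kernel-verified Lean document; each statement's English description precedes it below -/
import Mathlib

section
/- The autocorrelation coefficients of the balanced binary Rudin–Shapiro sequence satisfy η^{(2)}(m) = δ_{m,0} for all m ∈ ℤ; that is, lim_{N→∞} (1/(2N+1)) Σ_{i=−N}^{N} a_i a_{i+m} = 1 if m = 0 and equals 0 otherwise. -/
open Filter Finset


/-- `Qp f` : `|f N|` grows sublinearly, in the ∀ε ∃C form. -/
def Qp (f : ℕ → ℝ) : Prop :=
  ∀ ε : ℝ, 0 < ε → ∃ C : ℝ, ∀ N : ℕ, |f N| ≤ ε * (2 * N + 1) + C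

lemma Qp_of_le {f g : ℕ → ℝ} (h : ∀ N, |f N| ≤ g N) (hg : Qp g) : Qp f := by
  intro ε hε
  obtain ⟨C, hC⟩ := hg ε hε
  exact ⟨C, fun N => ((h N).trans (le_abs_self _)).trans (hC N)⟩

lemma Qp_abs {f : ℕ → ℝ} (hf : Qp f) : Qp (fun N => |f N|) := by
  intro ε hε
  obtain ⟨C, hC⟩ := hf ε hε
  exact ⟨C, fun N => by rw [abs_abs]; exact hC N⟩

lemma Qp_const (c : ℝ) : Qp (fun _ => c) := by
  intro ε hε
  refine ⟨|c|, fun N => ?_⟩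
  have : (0:ℝ) ≤ ε * (2 * N + 1) := by positivity
  linarith

lemma Qp_add {f g : ℕ → ℝ} (hf : Qp f) (hg : Qp g) : Qp (fun N => f N + g N) := by
  intro ε hε
  obtain ⟨C, hC⟩ := hf (ε/2) (by linarith)
  obtain ⟨D, hD⟩ := hg (ε/2) (by linarith)
  refine ⟨C + D, fun N => ?_⟩
  have h1 := hC N; have h2 := hD N
  have := abs_add_le (f N) (g N)
  linarith

lemma Qp_smul (c : ℝ) {f : ℕ → ℝ} (hf : Qp f) : Qp (fun N => c * f N) := by
  intro ε hε
  have hc : (0:ℝ) < |c| + 1 := by positivity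
  obtain ⟨C, hC⟩ := hf (ε / (|c| + 1)) (div_pos hε hc)
  refine ⟨(|c| + 1) * C, fun N => ?_⟩
  have h1 := hC N
  have h2 : |c * f N| = |c| * |f N| := abs_mul _ _
  have h3 : |c| * |f N| ≤ (|c| + 1) * |f N| := by
    have := abs_nonneg (f N); nlinarith
  have h4 : (|c| + 1) * |f N| ≤ (|c| + 1) * (ε / (|c| + 1) * (2 * N + 1) + C) := by
    apply mul_le_mul_of_nonneg_left h1 (by positivity)
  have h5 : (|c| + 1) * (ε / (|c| + 1) * (2 * N + 1)) = ε * (2 * N + 1) := by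
    field_simp
  nlinarith [h4, h5]

lemma Qp_shrink {f : ℕ → ℝ} (hf : Qp f) : Qp (fun N => f (N / 4 + 1)) := by
  intro ε hε
  obtain ⟨C, hC⟩ := hf ε hε
  refine ⟨C + 3 * ε, fun N => ?_⟩
  have h1 := hC (N / 4 + 1)
  have h2 : ((N / 4 + 1 : ℕ) : ℝ) ≤ (N : ℝ) / 4 + 1 := by
    push_cast
    have : ((N / 4 : ℕ) : ℝ) ≤ (N : ℝ) / 4 := by
      have := Nat.div_mul_le_self N 4
      have h := (Nat.cast_le (α := ℝ)).2 this
      push_cast at h; linarith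
    linarith
  have h3 : ε * (2 * ((N / 4 + 1 : ℕ) : ℝ) + 1) ≤ ε * (2 * N + 1) + 3 * ε := by
    have hN : ((N:ℝ)/4) ≤ N := by
      have : (0:ℝ) ≤ N := Nat.cast_nonneg N
      linarith
    nlinarith
  linarith

/-- Self-referential bound: if `|f N| ≤ |f (N/4+1)| + g N` with `g` sublinear and
`f` trivially linearly bounded, then `f` is sublinear. -/
lemma Qp_selfref {f g : ℕ → ℝ} (hb : ∀ N, |f N| ≤ 2 * N + 1) (hg : Qp g)
    (h : ∀ N, |f N| ≤ |f (N / 4 + 1)| + g N) : Qp f := by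
  intro ε hε
  obtain ⟨C, hC⟩ := hg (ε / 6) (by linarith)
  have hCC : (0:ℝ) ≤ C + |C| + 1 := by linarith [abs_nonneg C, neg_abs_le C]
  obtain ⟨N0, hN0⟩ := exists_nat_ge ((6 * (C + |C| + 1)) / ε + 6)
  set C' : ℝ := 2 * N0 + 1 + |C| + C + 1 with hC'def
  refine ⟨C', ?_⟩
  intro N
  induction N using Nat.strong_induction_on with
  | _ N ih =>
    by_cases hN : N < N0
    · have h1 := hb N
      have h2 : (N : ℝ) ≤ N0 := by exact_mod_cast hN.le
      have h3 : (0:ℝ) ≤ ε * (2 * N + 1) := by positivity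
      simp only [hC'def]
      linarith [abs_nonneg C, neg_abs_le C]
    · push_neg at hN
      have hNc : (N0 : ℝ) ≤ N := by exact_mod_cast hN
      have hN0R : ((6 * (C + |C| + 1)) / ε + 6 : ℝ) ≤ N := le_trans hN0 hNc
      have hN6 : (6:ℝ) ≤ (N:ℝ) := by
        have : (0:ℝ) ≤ 6 * (C + |C| + 1) / ε := div_nonneg (by linarith) hε.le
        linarith
      have hN6' : 6 ≤ N := by exact_mod_cast hN6
      have hKlt : N / 4 + 1 < N := by omega
      have hK : ((N / 4 + 1 : ℕ) : ℝ) ≤ (N : ℝ) / 4 + 1 := by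
        push_cast
        have h := (Nat.cast_le (α := ℝ)).2 (Nat.div_mul_le_self N 4)
        push_cast at h; linarith
      have hfK := ih _ hKlt
      have hgN := hC N
      have hA : 6 * (C + |C| + 1) ≤ ((N:ℝ) - 6) * ε :=
        (div_le_iff₀ hε).mp (by linarith)
      have hmul : ε * ((N / 4 + 1 : ℕ) : ℝ) ≤ ε * ((N:ℝ) / 4 + 1) :=
        mul_le_mul_of_nonneg_left hK hε.le
      have habs : |f N| ≤ |f (N / 4 + 1)| + g N := h N
      have hgabs : g N ≤ |g N| := le_abs_self _
      nlinarith [abs_nonneg C, neg_abs_le C]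


lemma sum_Icc_split (f : ℤ → ℝ) (a b c : ℤ) (h1 : a ≤ b + 1) (h2 : b ≤ c) :
    ∑ i ∈ Icc a c, f i = ∑ i ∈ Icc a b, f i + ∑ i ∈ Icc (b + 1) c, f i := by
  rw [← Finset.sum_union]
  · congr 1
    ext x
    simp only [mem_union, mem_Icc]
    omega
  · rw [Finset.disjoint_left]
    intro x hx hx'
    simp only [mem_Icc] at hx hx'
    omega

lemma sum_Icc_single (f : ℤ → ℝ) (t : ℤ) : ∑ i ∈ Icc t t, f i = f t := by
  rw [Icc_self, Finset.sum_singleton]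

lemma sum_Icc_four (f : ℤ → ℝ) (t : ℤ) :
    ∑ i ∈ Icc t (t + 3), f i = f t + f (t + 1) + f (t + 2) + f (t + 3) := by
  have A := sum_Icc_split f t t (t+3) (by omega) (by omega)
  have B := sum_Icc_split f (t+1) (t+1) (t+3) (by omega) (by omega)
  have C := sum_Icc_split f (t+1+1) (t+2) (t+3) (by omega) (by omega)
  have F1 := sum_Icc_single f t
  have F2 := sum_Icc_single f (t+1)
  have F3 := sum_Icc_single f (t+2)
  have F4 := sum_Icc_single f (t+3)
  ring_nf at A B C F2 F3 F4 ⊢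
  linarith

/-- Block decomposition of a symmetric-ish window into blocks of 4. -/
lemma sum_blocks (f : ℤ → ℝ) (K : ℕ) :
    ∑ i ∈ Icc (-(4 * (K:ℤ))) (4 * (K:ℤ) + 3), f i
      = ∑ j ∈ Icc (-(K:ℤ)) (K:ℤ), (f (4*j) + f (4*j+1) + f (4*j+2) + f (4*j+3)) := by
  induction K with
  | zero =>
    simp only [Nat.cast_zero, mul_zero, neg_zero, zero_add, Icc_self, Finset.sum_singleton]
    have := sum_Icc_four f 0
    simpa using this
  | succ K ih =>
    have A := sum_Icc_split f (-(4*(K:ℤ))-4) (-(4*(K:ℤ))-1) (4*(K:ℤ)+7) (by omega) (by omega)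
    have eB : (-(4*(K:ℤ))-1)+1 = -(4*(K:ℤ)) := by ring
    have B := sum_Icc_split f (-(4*(K:ℤ))-1+1) (4*(K:ℤ)+3) (4*(K:ℤ)+7) (by omega) (by omega)
    rw [eB] at A B
    have C1 := sum_Icc_four f (-(4*(K:ℤ))-4)
    have C2 := sum_Icc_four f (4*(K:ℤ)+4)
    have D := sum_Icc_split (fun j => f (4*j) + f (4*j+1) + f (4*j+2) + f (4*j+3))
      (-((K:ℤ)+1)) (-((K:ℤ)+1)) ((K:ℤ)+1) (by omega) (by omega)
    have eE : -((K:ℤ)+1)+1 = -(K:ℤ) := by ring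
    have E := sum_Icc_split (fun j => f (4*j) + f (4*j+1) + f (4*j+2) + f (4*j+3))
      (-((K:ℤ)+1)+1) ((K:ℤ)) ((K:ℤ)+1) (by omega) (by omega)
    rw [eE] at E D
    have F1 := sum_Icc_single (fun j => f (4*j) + f (4*j+1) + f (4*j+2) + f (4*j+3)) (-((K:ℤ)+1))
    have F2 := sum_Icc_single (fun j => f (4*j) + f (4*j+1) + f (4*j+2) + f (4*j+3)) ((K:ℤ)+1)
    show ∑ i ∈ Icc (-(4 * ((K:ℕ)+1 : ℕ) : ℤ)) (4 * ((K:ℕ)+1 : ℕ) + 3), f i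
      = ∑ j ∈ Icc (-((K:ℕ)+1 : ℕ) : ℤ) (((K:ℕ)+1 : ℕ) : ℤ),
          (f (4*j) + f (4*j+1) + f (4*j+2) + f (4*j+3))
    push_cast
    have e1 : (-(4*((K:ℤ)+1))) = (-(4*(K:ℤ))-4) := by ring
    have e2 : (4*((K:ℤ)+1)+3) = (4*(K:ℤ)+7) := by ring
    have e3 : (4*(K:ℤ)+4+3) = (4*(K:ℤ)+7) := by ring
    have e4 : (-(4*(K:ℤ))-4+3) = (-(4*(K:ℤ))-1) := by ring
    have e5 : (4*(K:ℤ)+3+1) = (4*(K:ℤ)+4) := by ring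
    rw [e4] at C1
    rw [e5] at B
    rw [e3] at C2
    rw [e1, e2, A, B, ih, D, E, F1, F2, C1, C2]
    ring_nf

/-- Window comparison: the symmetric window `[-N,N]` differs from the block window
`[-(4K), 4K+3]`, `K = N/4+1`, by at most 11 terms. -/
lemma window_est (f : ℤ → ℝ) (hf : ∀ i, |f i| ≤ 1) (N : ℕ) :
    |∑ i ∈ Icc (-(N:ℤ)) (N:ℤ), f i
      - ∑ i ∈ Icc (-(4 * ((N/4+1 : ℕ):ℤ))) (4 * ((N/4+1 : ℕ):ℤ) + 3), f i| ≤ 11 := by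
  set K : ℕ := N / 4 + 1 with hK
  have hsub : Icc (-(N:ℤ)) (N:ℤ) ⊆ Icc (-(4 * (K:ℤ))) (4 * (K:ℤ) + 3) := by
    intro x hx
    simp only [mem_Icc] at hx ⊢
    have h1 : (N:ℤ) ≤ 4 * (K:ℤ) := by
      have : N ≤ 4 * K := by omega
      exact_mod_cast this
    omega
  rw [← Finset.sum_sdiff hsub]
  have : ∑ i ∈ Icc (-(N:ℤ)) (N:ℤ), f i -
      (∑ i ∈ Icc (-(4*(K:ℤ))) (4*(K:ℤ)+3) \ Icc (-(N:ℤ)) (N:ℤ), f i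
        + ∑ i ∈ Icc (-(N:ℤ)) (N:ℤ), f i)
      = -∑ i ∈ Icc (-(4*(K:ℤ))) (4*(K:ℤ)+3) \ Icc (-(N:ℤ)) (N:ℤ), f i := by ring
  rw [this, abs_neg]
  have hcard : (Icc (-(4*(K:ℤ))) (4*(K:ℤ)+3) \ Icc (-(N:ℤ)) (N:ℤ)).card ≤ 11 := by
    rw [Finset.card_sdiff_of_subset hsub]
    rw [Int.card_Icc, Int.card_Icc]
    have h1 : (4*(K:ℤ)+3+1 - -(4*(K:ℤ))) = 8*(K:ℤ)+4 := by ring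
    rw [h1]
    have h2 : ((N:ℤ)+1 - -(N:ℤ)) = 2*(N:ℤ)+1 := by ring
    rw [h2]
    have h3 : (8*(K:ℤ)+4).toNat = 8*K+4 := by omega
    have h4 : (2*(N:ℤ)+1).toNat = 2*N+1 := by omega
    rw [h3, h4]
    omega
  calc |∑ i ∈ Icc (-(4*(K:ℤ))) (4*(K:ℤ)+3) \ Icc (-(N:ℤ)) (N:ℤ), f i|
      ≤ ∑ i ∈ Icc (-(4*(K:ℤ))) (4*(K:ℤ)+3) \ Icc (-(N:ℤ)) (N:ℤ), |f i| :=
        Finset.abs_sum_le_sum_abs _ _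
    _ ≤ (Icc (-(4*(K:ℤ))) (4*(K:ℤ)+3) \ Icc (-(N:ℤ)) (N:ℤ)).card • (1:ℝ) :=
        Finset.sum_le_card_nsmul _ _ 1 (fun x _ => hf x)
    _ ≤ 11 := by
        rw [nsmul_eq_mul, mul_one]
        exact_mod_cast hcard

lemma neg_one_zpow_cases (n : ℤ) : (-1:ℝ)^n = 1 ∨ (-1:ℝ)^n = -1 := by
  have h : (-1:ℝ)^n * (-1:ℝ)^n = 1 := by
    rw [← mul_zpow]; norm_num
  exact mul_self_eq_one_iff.mp h

lemma neg_one_zpow_add (j k : ℤ) : (-1:ℝ)^(j+k) = (-1:ℝ)^j * (-1:ℝ)^k :=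
  zpow_add₀ (by norm_num) j k

lemma neg_one_zpow_four_mul_add (j r : ℤ) : (-1:ℝ)^(4*j+r) = (-1:ℝ)^r := by
  rw [neg_one_zpow_add (4*j) r]
  have : (-1:ℝ)^(4*j) = 1 := by
    rw [zpow_mul]
    norm_num
  rw [this, one_mul]

section RS
variable (a : ℤ → ℝ)

/-- plain correlation sum over the symmetric window `[-N,N]` -/
noncomputable def Ssum (m : ℤ) (N : ℕ) : ℝ :=
  ∑ i ∈ Icc (-(N:ℤ)) (N:ℤ), a i * a (i + m)

/-- `(-1)^i`-twisted correlation sum -/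
noncomputable def Tsum (m : ℤ) (N : ℕ) : ℝ :=
  ∑ i ∈ Icc (-(N:ℤ)) (N:ℤ), (-1:ℝ)^i * (a i * a (i + m))

lemma abs_a_one (ha : ∀ i, a i = 1 ∨ a i = -1) (i : ℤ) : |a i| = 1 := by
  rcases ha i with h | h <;> rw [h] <;> norm_num

lemma abs_corr_le_one (ha : ∀ i, a i = 1 ∨ a i = -1) (m i : ℤ) : |a i * a (i + m)| ≤ 1 := by
  rw [abs_mul, abs_a_one a ha, abs_a_one a ha, mul_one]

lemma abs_tcorr_le_one (ha : ∀ i, a i = 1 ∨ a i = -1) (m i : ℤ) :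
    |(-1:ℝ)^i * (a i * a (i + m))| ≤ 1 := by
  rw [abs_mul, abs_neg_one_zpow, one_mul]
  exact abs_corr_le_one a ha m i

lemma Ssum_triv_bound (ha : ∀ i, a i = 1 ∨ a i = -1) (m : ℤ) (N : ℕ) : |Ssum a m N| ≤ 2 * N + 1 := by
  unfold Ssum
  calc |∑ i ∈ Icc (-(N:ℤ)) (N:ℤ), a i * a (i + m)|
      ≤ ∑ i ∈ Icc (-(N:ℤ)) (N:ℤ), |a i * a (i + m)| := Finset.abs_sum_le_sum_abs _ _
    _ ≤ (Icc (-(N:ℤ)) (N:ℤ)).card • (1:ℝ) :=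
        Finset.sum_le_card_nsmul _ _ 1 (fun x _ => abs_corr_le_one a ha m x)
    _ ≤ 2 * N + 1 := by
        rw [nsmul_eq_mul, mul_one, Int.card_Icc]
        have : ((N:ℤ) + 1 - -(N:ℤ)).toNat = 2*N+1 := by omega
        rw [this]; push_cast; linarith

lemma Tsum_triv_bound (ha : ∀ i, a i = 1 ∨ a i = -1) (m : ℤ) (N : ℕ) : |Tsum a m N| ≤ 2 * N + 1 := by
  unfold Tsum
  calc |∑ i ∈ Icc (-(N:ℤ)) (N:ℤ), (-1:ℝ)^i * (a i * a (i + m))|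
      ≤ ∑ i ∈ Icc (-(N:ℤ)) (N:ℤ), |(-1:ℝ)^i * (a i * a (i + m))| := Finset.abs_sum_le_sum_abs _ _
    _ ≤ (Icc (-(N:ℤ)) (N:ℤ)).card • (1:ℝ) :=
        Finset.sum_le_card_nsmul _ _ 1 (fun x _ => abs_tcorr_le_one a ha m x)
    _ ≤ 2 * N + 1 := by
        rw [nsmul_eq_mul, mul_one, Int.card_Icc]
        have : ((N:ℤ) + 1 - -(N:ℤ)).toNat = 2*N+1 := by omega
        rw [this]; push_cast; linarith

/-- generic assembly: window + blocks. -/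
lemma assemble (f g : ℤ → ℝ) (hf : ∀ i, |f i| ≤ 1) (N : ℕ)
    (hblock : ∀ j : ℤ, f (4*j) + f (4*j+1) + f (4*j+2) + f (4*j+3) = g j) :
    |∑ i ∈ Icc (-(N:ℤ)) (N:ℤ), f i
      - ∑ j ∈ Icc (-((N/4+1 : ℕ):ℤ)) ((N/4+1 : ℕ):ℤ), g j| ≤ 11 := by
  have W := window_est f hf N
  have B := sum_blocks f (N/4+1)
  rw [B] at W
  have : ∑ j ∈ Icc (-((N/4+1 : ℕ):ℤ)) ((N/4+1 : ℕ):ℤ),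
      (f (4*j) + f (4*j+1) + f (4*j+2) + f (4*j+3))
      = ∑ j ∈ Icc (-((N/4+1 : ℕ):ℤ)) ((N/4+1 : ℕ):ℤ), g j :=
    Finset.sum_congr rfl (fun j _ => hblock j)
  rw [this] at W
  exact W



/-- the Rudin–Shapiro type recursion -/
def RSrec (a : ℤ → ℝ) : Prop :=
  ∀ m : ℤ, a (4 * m) = a m ∧ a (4 * m + 1) = a m ∧
    a (4 * m + 2) = (-1 : ℝ) ^ m * a m ∧ a (4 * m + 3) = -((-1 : ℝ) ^ m) * a m

section Blocks
variable (a : ℤ → ℝ)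

lemma w40 (j : ℤ) : (-1:ℝ)^(4*j) = 1 := by rw [zpow_mul]; norm_num
lemma w41 (j : ℤ) : (-1:ℝ)^(4*j+1) = -1 := by
  rw [neg_one_zpow_add (4*j) 1, w40, one_mul, zpow_one]
lemma w42 (j : ℤ) : (-1:ℝ)^(4*j+2) = 1 := by
  rw [neg_one_zpow_add (4*j) 2, w40, one_mul]; norm_num
lemma w43 (j : ℤ) : (-1:ℝ)^(4*j+3) = -1 := by
  rw [neg_one_zpow_add (4*j) 3, w40, one_mul]; norm_num

lemma blockS0 (hrec : RSrec a) (j k : ℤ) :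
    a (4*j) * a ((4*j) + (4*k)) + a (4*j+1) * a ((4*j+1) + (4*k))
      + a (4*j+2) * a ((4*j+2) + (4*k)) + a (4*j+3) * a ((4*j+3) + (4*k))
    = (2 + 2*(-1:ℝ)^k) * (a j * a (j+k)) := by
  obtain ⟨h0, h1, h2, h3⟩ := hrec j
  obtain ⟨g0, g1, g2, g3⟩ := hrec (j+k)
  rw [show (4*j:ℤ) + (4*k) = 4*(j+k) from by ring,
      show ((4*j:ℤ)+1) + (4*k) = 4*(j+k)+1 from by ring,
      show ((4*j:ℤ)+2) + (4*k) = 4*(j+k)+2 from by ring,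
      show ((4*j:ℤ)+3) + (4*k) = 4*(j+k)+3 from by ring]
  rw [h0, h1, h2, h3, g0, g1, g2, g3, neg_one_zpow_add j k]
  rcases neg_one_zpow_cases j with hj | hj <;> rcases neg_one_zpow_cases k with hk | hk <;>
    rw [hj, hk] <;> ring

lemma blockT0 (hrec : RSrec a) (j k : ℤ) :
    (-1:ℝ)^(4*j) * (a (4*j) * a ((4*j) + (4*k)))
      + (-1:ℝ)^(4*j+1) * (a (4*j+1) * a ((4*j+1) + (4*k)))
      + (-1:ℝ)^(4*j+2) * (a (4*j+2) * a ((4*j+2) + (4*k)))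
      + (-1:ℝ)^(4*j+3) * (a (4*j+3) * a ((4*j+3) + (4*k)))
    = 0 := by
  obtain ⟨h0, h1, h2, h3⟩ := hrec j
  obtain ⟨g0, g1, g2, g3⟩ := hrec (j+k)
  rw [w40, w41, w42, w43]
  rw [show (4*j:ℤ) + (4*k) = 4*(j+k) from by ring,
      show ((4*j:ℤ)+1) + (4*k) = 4*(j+k)+1 from by ring,
      show ((4*j:ℤ)+2) + (4*k) = 4*(j+k)+2 from by ring,
      show ((4*j:ℤ)+3) + (4*k) = 4*(j+k)+3 from by ring]
  rw [h0, h1, h2, h3, g0, g1, g2, g3, neg_one_zpow_add j k]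
  rcases neg_one_zpow_cases j with hj | hj <;> rcases neg_one_zpow_cases k with hk | hk <;>
    rw [hj, hk] <;> ring

lemma blockT1 (hrec : RSrec a) (j k : ℤ) :
    (-1:ℝ)^(4*j) * (a (4*j) * a ((4*j) + (4*k+1)))
      + (-1:ℝ)^(4*j+1) * (a (4*j+1) * a ((4*j+1) + (4*k+1)))
      + (-1:ℝ)^(4*j+2) * (a (4*j+2) * a ((4*j+2) + (4*k+1)))
      + (-1:ℝ)^(4*j+3) * (a (4*j+3) * a ((4*j+3) + (4*k+1)))
    = (1 - (-1:ℝ)^k) * (a j * a (j+k)) - (-1:ℝ)^k * ((-1:ℝ)^j * (a j * a (j+k)))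
      + (-1:ℝ)^j * (a j * a (j+(k+1))) := by
  obtain ⟨h0, h1, h2, h3⟩ := hrec j
  obtain ⟨g0, g1, g2, g3⟩ := hrec (j+k)
  obtain ⟨f0, f1, f2, f3⟩ := hrec (j+k+1)
  rw [w40, w41, w42, w43]
  rw [show (4*j:ℤ) + (4*k+1) = 4*(j+k)+1 from by ring,
      show ((4*j:ℤ)+1) + (4*k+1) = 4*(j+k)+2 from by ring,
      show ((4*j:ℤ)+2) + (4*k+1) = 4*(j+k)+3 from by ring,
      show ((4*j:ℤ)+3) + (4*k+1) = 4*(j+k+1) from by ring]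
  rw [h0, h1, h2, h3, g1, g2, g3, f0, neg_one_zpow_add j k]
  rw [show (j:ℤ)+(k+1) = j+k+1 from by ring]
  rcases neg_one_zpow_cases j with hj | hj <;> rcases neg_one_zpow_cases k with hk | hk <;>
    rw [hj, hk] <;> ring


lemma blockS1 (hrec : RSrec a) (j k : ℤ) :
    a (4*j) * a ((4*j) + (4*k+1)) + a (4*j+1) * a ((4*j+1) + (4*k+1))
      + a (4*j+2) * a ((4*j+2) + (4*k+1)) + a (4*j+3) * a ((4*j+3) + (4*k+1))
    = (1 - (-1:ℝ)^k) * (a j * a (j+k)) + (-1:ℝ)^k * ((-1:ℝ)^j * (a j * a (j+k)))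
      - (-1:ℝ)^j * (a j * a (j+(k+1))) := by
  obtain ⟨h0, h1, h2, h3⟩ := hrec j
  obtain ⟨g0, g1, g2, g3⟩ := hrec (j+k)
  obtain ⟨f0, f1, f2, f3⟩ := hrec (j+k+1)
  rw [show (4*j:ℤ) + (4*k+1) = 4*(j+k)+1 from by ring,
      show ((4*j:ℤ)+1) + (4*k+1) = 4*(j+k)+2 from by ring,
      show ((4*j:ℤ)+2) + (4*k+1) = 4*(j+k)+3 from by ring,
      show ((4*j:ℤ)+3) + (4*k+1) = 4*(j+k+1) from by ring]
  rw [h0, h1, h2, h3, g1, g2, g3, f0]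
  rw [neg_one_zpow_add j k]
  rw [show (j:ℤ)+(k+1) = j+k+1 from by ring]
  rcases neg_one_zpow_cases j with hj | hj <;> rcases neg_one_zpow_cases k with hk | hk <;>
    rw [hj, hk] <;> ring

lemma blockS2 (hrec : RSrec a) (j k : ℤ) :
    a (4*j) * a ((4*j) + (4*k+2)) + a (4*j+1) * a ((4*j+1) + (4*k+2))
      + a (4*j+2) * a ((4*j+2) + (4*k+2)) + a (4*j+3) * a ((4*j+3) + (4*k+2))
    = 0 := by
  obtain ⟨h0, h1, h2, h3⟩ := hrec j
  obtain ⟨g0, g1, g2, g3⟩ := hrec (j+k)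
  obtain ⟨f0, f1, f2, f3⟩ := hrec (j+k+1)
  rw [show (4*j:ℤ) + (4*k+2) = 4*(j+k)+2 from by ring,
      show ((4*j:ℤ)+1) + (4*k+2) = 4*(j+k)+3 from by ring,
      show ((4*j:ℤ)+2) + (4*k+2) = 4*(j+k+1) from by ring,
      show ((4*j:ℤ)+3) + (4*k+2) = 4*(j+k+1)+1 from by ring]
  rw [h0, h1, h2, h3, g2, g3, f0, f1, neg_one_zpow_add j k]
  rcases neg_one_zpow_cases j with hj | hj <;> rcases neg_one_zpow_cases k with hk | hk <;>
    rw [hj, hk] <;> ring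

lemma blockT2 (hrec : RSrec a) (j k : ℤ) :
    (-1:ℝ)^(4*j) * (a (4*j) * a ((4*j) + (4*k+2)))
      + (-1:ℝ)^(4*j+1) * (a (4*j+1) * a ((4*j+1) + (4*k+2)))
      + (-1:ℝ)^(4*j+2) * (a (4*j+2) * a ((4*j+2) + (4*k+2)))
      + (-1:ℝ)^(4*j+3) * (a (4*j+3) * a ((4*j+3) + (4*k+2)))
    = 2*(-1:ℝ)^k * ((-1:ℝ)^j * (a j * a (j+k)))
      + 2 * ((-1:ℝ)^j * (a j * a (j+(k+1)))) := by
  obtain ⟨h0, h1, h2, h3⟩ := hrec j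
  obtain ⟨g0, g1, g2, g3⟩ := hrec (j+k)
  obtain ⟨f0, f1, f2, f3⟩ := hrec (j+k+1)
  rw [w40, w41, w42, w43]
  rw [show (4*j:ℤ) + (4*k+2) = 4*(j+k)+2 from by ring,
      show ((4*j:ℤ)+1) + (4*k+2) = 4*(j+k)+3 from by ring,
      show ((4*j:ℤ)+2) + (4*k+2) = 4*(j+k+1) from by ring,
      show ((4*j:ℤ)+3) + (4*k+2) = 4*(j+k+1)+1 from by ring]
  rw [h0, h1, h2, h3, g2, g3, f0, f1, neg_one_zpow_add j k]
  rw [show (j:ℤ)+(k+1) = j+k+1 from by ring]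
  rcases neg_one_zpow_cases j with hj | hj <;> rcases neg_one_zpow_cases k with hk | hk <;>
    rw [hj, hk] <;> ring

lemma blockS3 (hrec : RSrec a) (j k : ℤ) :
    a (4*j) * a ((4*j) + (4*k+3)) + a (4*j+1) * a ((4*j+1) + (4*k+3))
      + a (4*j+2) * a ((4*j+2) + (4*k+3)) + a (4*j+3) * a ((4*j+3) + (4*k+3))
    = -((-1:ℝ)^k) * ((-1:ℝ)^j * (a j * a (j+k))) + (1 + (-1:ℝ)^k) * (a j * a (j+(k+1)))
      + (-1:ℝ)^j * (a j * a (j+(k+1))) := by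
  obtain ⟨h0, h1, h2, h3⟩ := hrec j
  obtain ⟨g0, g1, g2, g3⟩ := hrec (j+k)
  obtain ⟨f0, f1, f2, f3⟩ := hrec (j+k+1)
  rw [show (4*j:ℤ) + (4*k+3) = 4*(j+k)+3 from by ring,
      show ((4*j:ℤ)+1) + (4*k+3) = 4*(j+k+1) from by ring,
      show ((4*j:ℤ)+2) + (4*k+3) = 4*(j+k+1)+1 from by ring,
      show ((4*j:ℤ)+3) + (4*k+3) = 4*(j+k+1)+2 from by ring]
  rw [h0, h1, h2, h3, g3, f0, f1, f2]
  rw [show (j:ℤ)+k+1 = j+(k+1) from by ring, neg_one_zpow_add j (k+1),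
      neg_one_zpow_add k 1, neg_one_zpow_add j k, zpow_one]
  rcases neg_one_zpow_cases j with hj | hj <;> rcases neg_one_zpow_cases k with hk | hk <;>
    rw [hj, hk] <;> ring

lemma blockT3 (hrec : RSrec a) (j k : ℤ) :
    (-1:ℝ)^(4*j) * (a (4*j) * a ((4*j) + (4*k+3)))
      + (-1:ℝ)^(4*j+1) * (a (4*j+1) * a ((4*j+1) + (4*k+3)))
      + (-1:ℝ)^(4*j+2) * (a (4*j+2) * a ((4*j+2) + (4*k+3)))
      + (-1:ℝ)^(4*j+3) * (a (4*j+3) * a ((4*j+3) + (4*k+3)))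
    = -((-1:ℝ)^k) * ((-1:ℝ)^j * (a j * a (j+k))) - (1 + (-1:ℝ)^k) * (a j * a (j+(k+1)))
      + (-1:ℝ)^j * (a j * a (j+(k+1))) := by
  obtain ⟨h0, h1, h2, h3⟩ := hrec j
  obtain ⟨g0, g1, g2, g3⟩ := hrec (j+k)
  obtain ⟨f0, f1, f2, f3⟩ := hrec (j+k+1)
  rw [w40, w41, w42, w43]
  rw [show (4*j:ℤ) + (4*k+3) = 4*(j+k)+3 from by ring,
      show ((4*j:ℤ)+1) + (4*k+3) = 4*(j+k+1) from by ring,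
      show ((4*j:ℤ)+2) + (4*k+3) = 4*(j+k+1)+1 from by ring,
      show ((4*j:ℤ)+3) + (4*k+3) = 4*(j+k+1)+2 from by ring]
  rw [h0, h1, h2, h3, g3, f0, f1, f2]
  rw [show (j:ℤ)+k+1 = j+(k+1) from by ring, neg_one_zpow_add j (k+1),
      neg_one_zpow_add k 1, neg_one_zpow_add j k, zpow_one]
  rcases neg_one_zpow_cases j with hj | hj <;> rcases neg_one_zpow_cases k with hk | hk <;>
    rw [hj, hk] <;> ring

end Blocks

section Est
variable (a : ℤ → ℝ)

lemma abs_le_of_window {x y : ℝ} (h : |x - y| ≤ 11) {B : ℝ} (hy : |y| ≤ B) : |x| ≤ B + 11 := by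
  have := abs_sub_abs_le_abs_sub x y
  linarith

lemma estS0 (ha : ∀ i, a i = 1 ∨ a i = -1) (hrec : RSrec a) (k : ℤ) (N : ℕ) :
    |Ssum a (4*k) N| ≤ |2 + 2*(-1:ℝ)^k| * |Ssum a k (N/4+1)| + 11 := by
  have H := assemble (fun i => a i * a (i + 4*k))
    (fun j => (2 + 2*(-1:ℝ)^k) * (a j * a (j+k)))
    (fun i => abs_corr_le_one a ha (4*k) i) N (fun j => blockS0 a hrec j k)
  have Hg : ∑ j ∈ Icc (-((N/4+1 : ℕ):ℤ)) ((N/4+1 : ℕ):ℤ),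
        (2 + 2*(-1:ℝ)^k) * (a j * a (j+k)) = (2 + 2*(-1:ℝ)^k) * Ssum a k (N/4+1) := by
    rw [Ssum, Finset.mul_sum]
  rw [Hg] at H
  refine abs_le_of_window H ?_
  rw [abs_mul]

lemma estT0 (ha : ∀ i, a i = 1 ∨ a i = -1) (hrec : RSrec a) (k : ℤ) (N : ℕ) : |Tsum a (4*k) N| ≤ 11 := by
  have H := assemble (fun i => (-1:ℝ)^i * (a i * a (i + 4*k))) (fun _ => 0)
    (fun i => abs_tcorr_le_one a ha (4*k) i) N (fun j => blockT0 a hrec j k)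
  simp only [Finset.sum_const_zero, sub_zero] at H
  exact H

lemma estS2 (ha : ∀ i, a i = 1 ∨ a i = -1) (hrec : RSrec a) (k : ℤ) (N : ℕ) : |Ssum a (4*k+2) N| ≤ 11 := by
  have H := assemble (fun i => a i * a (i + (4*k+2))) (fun _ => 0)
    (fun i => abs_corr_le_one a ha (4*k+2) i) N (fun j => blockS2 a hrec j k)
  simp only [Finset.sum_const_zero, sub_zero] at H
  exact H

lemma estS1 (ha : ∀ i, a i = 1 ∨ a i = -1) (hrec : RSrec a) (k : ℤ) (N : ℕ) :
    |Ssum a (4*k+1) N| ≤ |1 - (-1:ℝ)^k| * |Ssum a k (N/4+1)|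
      + |Tsum a k (N/4+1)| + |Tsum a (k+1) (N/4+1)| + 11 := by
  have H := assemble (fun i => a i * a (i + (4*k+1)))
    (fun j => (1 - (-1:ℝ)^k) * (a j * a (j+k)) + (-1:ℝ)^k * ((-1:ℝ)^j * (a j * a (j+k)))
      - (-1:ℝ)^j * (a j * a (j+(k+1))))
    (fun i => abs_corr_le_one a ha (4*k+1) i) N (fun j => blockS1 a hrec j k)
  have Hg : ∑ j ∈ Icc (-((N/4+1 : ℕ):ℤ)) ((N/4+1 : ℕ):ℤ),
        ((1 - (-1:ℝ)^k) * (a j * a (j+k)) + (-1:ℝ)^k * ((-1:ℝ)^j * (a j * a (j+k)))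
          - (-1:ℝ)^j * (a j * a (j+(k+1))))
      = (1 - (-1:ℝ)^k) * Ssum a k (N/4+1) + (-1:ℝ)^k * Tsum a k (N/4+1)
          - Tsum a (k+1) (N/4+1) := by
    rw [Ssum, Tsum, Tsum, Finset.mul_sum, Finset.mul_sum, ← Finset.sum_add_distrib,
      ← Finset.sum_sub_distrib]
  rw [Hg] at H
  refine abs_le_of_window H ?_
  have h1 : |(1 - (-1:ℝ)^k) * Ssum a k (N/4+1) + (-1:ℝ)^k * Tsum a k (N/4+1)
      - Tsum a (k+1) (N/4+1)|
      ≤ |(1 - (-1:ℝ)^k) * Ssum a k (N/4+1)| + |(-1:ℝ)^k * Tsum a k (N/4+1)|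
        + |Tsum a (k+1) (N/4+1)| := by
    have h2 := abs_add_le ((1 - (-1:ℝ)^k) * Ssum a k (N/4+1)) ((-1:ℝ)^k * Tsum a k (N/4+1))
    have h3 := abs_add_le ((1 - (-1:ℝ)^k) * Ssum a k (N/4+1) + (-1:ℝ)^k * Tsum a k (N/4+1))
      (-(Tsum a (k+1) (N/4+1)))
    rw [abs_neg] at h3
    rw [sub_eq_add_neg]
    linarith
  rw [abs_mul, abs_mul, abs_neg_one_zpow, one_mul] at h1
  exact h1

lemma estT1 (ha : ∀ i, a i = 1 ∨ a i = -1) (hrec : RSrec a) (k : ℤ) (N : ℕ) :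
    |Tsum a (4*k+1) N| ≤ |1 - (-1:ℝ)^k| * |Ssum a k (N/4+1)|
      + |Tsum a k (N/4+1)| + |Tsum a (k+1) (N/4+1)| + 11 := by
  have H := assemble (fun i => (-1:ℝ)^i * (a i * a (i + (4*k+1))))
    (fun j => (1 - (-1:ℝ)^k) * (a j * a (j+k)) - (-1:ℝ)^k * ((-1:ℝ)^j * (a j * a (j+k)))
      + (-1:ℝ)^j * (a j * a (j+(k+1))))
    (fun i => abs_tcorr_le_one a ha (4*k+1) i) N (fun j => blockT1 a hrec j k)
  have Hg : ∑ j ∈ Icc (-((N/4+1 : ℕ):ℤ)) ((N/4+1 : ℕ):ℤ),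
        ((1 - (-1:ℝ)^k) * (a j * a (j+k)) - (-1:ℝ)^k * ((-1:ℝ)^j * (a j * a (j+k)))
          + (-1:ℝ)^j * (a j * a (j+(k+1))))
      = (1 - (-1:ℝ)^k) * Ssum a k (N/4+1) - (-1:ℝ)^k * Tsum a k (N/4+1)
          + Tsum a (k+1) (N/4+1) := by
    rw [Ssum, Tsum, Tsum, Finset.mul_sum, Finset.mul_sum, ← Finset.sum_sub_distrib,
      ← Finset.sum_add_distrib]
  rw [Hg] at H
  refine abs_le_of_window H ?_
  have h1 : |(1 - (-1:ℝ)^k) * Ssum a k (N/4+1) - (-1:ℝ)^k * Tsum a k (N/4+1)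
      + Tsum a (k+1) (N/4+1)|
      ≤ |(1 - (-1:ℝ)^k) * Ssum a k (N/4+1)| + |(-1:ℝ)^k * Tsum a k (N/4+1)|
        + |Tsum a (k+1) (N/4+1)| := by
    have h2 := abs_add_le ((1 - (-1:ℝ)^k) * Ssum a k (N/4+1)) (-((-1:ℝ)^k * Tsum a k (N/4+1)))
    have h3 := abs_add_le ((1 - (-1:ℝ)^k) * Ssum a k (N/4+1) - (-1:ℝ)^k * Tsum a k (N/4+1))
      (Tsum a (k+1) (N/4+1))
    rw [abs_neg] at h2
    rw [← sub_eq_add_neg] at h2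
    linarith
  rw [abs_mul, abs_mul, abs_neg_one_zpow, one_mul] at h1
  exact h1

lemma estT2 (ha : ∀ i, a i = 1 ∨ a i = -1) (hrec : RSrec a) (k : ℤ) (N : ℕ) :
    |Tsum a (4*k+2) N| ≤ 2 * |Tsum a k (N/4+1)| + 2 * |Tsum a (k+1) (N/4+1)| + 11 := by
  have H := assemble (fun i => (-1:ℝ)^i * (a i * a (i + (4*k+2))))
    (fun j => 2*(-1:ℝ)^k * ((-1:ℝ)^j * (a j * a (j+k)))
      + 2 * ((-1:ℝ)^j * (a j * a (j+(k+1)))))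
    (fun i => abs_tcorr_le_one a ha (4*k+2) i) N (fun j => blockT2 a hrec j k)
  have Hg : ∑ j ∈ Icc (-((N/4+1 : ℕ):ℤ)) ((N/4+1 : ℕ):ℤ),
        (2*(-1:ℝ)^k * ((-1:ℝ)^j * (a j * a (j+k))) + 2 * ((-1:ℝ)^j * (a j * a (j+(k+1)))))
      = 2*(-1:ℝ)^k * Tsum a k (N/4+1) + 2 * Tsum a (k+1) (N/4+1) := by
    rw [Tsum, Tsum, Finset.mul_sum, Finset.mul_sum, ← Finset.sum_add_distrib]
  rw [Hg] at H
  refine abs_le_of_window H ?_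
  have h1 := abs_add_le (2*(-1:ℝ)^k * Tsum a k (N/4+1)) (2 * Tsum a (k+1) (N/4+1))
  have h2 : |2*(-1:ℝ)^k * Tsum a k (N/4+1)| = 2 * |Tsum a k (N/4+1)| := by
    rw [abs_mul, abs_mul]
    rw [abs_neg_one_zpow]
    norm_num
  have h3 : |2 * Tsum a (k+1) (N/4+1)| = 2 * |Tsum a (k+1) (N/4+1)| := by
    rw [abs_mul]; norm_num
  linarith

lemma estS3 (ha : ∀ i, a i = 1 ∨ a i = -1) (hrec : RSrec a) (k : ℤ) (N : ℕ) :
    |Ssum a (4*k+3) N| ≤ |Tsum a k (N/4+1)| + |1 + (-1:ℝ)^k| * |Ssum a (k+1) (N/4+1)|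
      + |Tsum a (k+1) (N/4+1)| + 11 := by
  have H := assemble (fun i => a i * a (i + (4*k+3)))
    (fun j => -((-1:ℝ)^k) * ((-1:ℝ)^j * (a j * a (j+k)))
      + (1 + (-1:ℝ)^k) * (a j * a (j+(k+1))) + (-1:ℝ)^j * (a j * a (j+(k+1))))
    (fun i => abs_corr_le_one a ha (4*k+3) i) N (fun j => blockS3 a hrec j k)
  have Hg : ∑ j ∈ Icc (-((N/4+1 : ℕ):ℤ)) ((N/4+1 : ℕ):ℤ),
        (-((-1:ℝ)^k) * ((-1:ℝ)^j * (a j * a (j+k)))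
          + (1 + (-1:ℝ)^k) * (a j * a (j+(k+1))) + (-1:ℝ)^j * (a j * a (j+(k+1))))
      = -((-1:ℝ)^k) * Tsum a k (N/4+1) + (1 + (-1:ℝ)^k) * Ssum a (k+1) (N/4+1)
          + Tsum a (k+1) (N/4+1) := by
    rw [Ssum, Tsum, Tsum, Finset.mul_sum, Finset.mul_sum, ← Finset.sum_add_distrib,
      ← Finset.sum_add_distrib]
  rw [Hg] at H
  refine abs_le_of_window H ?_
  have h2 := abs_add_le (-((-1:ℝ)^k) * Tsum a k (N/4+1))
    ((1 + (-1:ℝ)^k) * Ssum a (k+1) (N/4+1))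
  have h3 := abs_add_le (-((-1:ℝ)^k) * Tsum a k (N/4+1)
    + (1 + (-1:ℝ)^k) * Ssum a (k+1) (N/4+1)) (Tsum a (k+1) (N/4+1))
  have h4 : |-((-1:ℝ)^k) * Tsum a k (N/4+1)| = |Tsum a k (N/4+1)| := by
    rw [abs_mul, abs_neg, abs_neg_one_zpow, one_mul]
  have h5 : |(1 + (-1:ℝ)^k) * Ssum a (k+1) (N/4+1)|
      = |1 + (-1:ℝ)^k| * |Ssum a (k+1) (N/4+1)| := abs_mul _ _
  linarith

lemma estT3 (ha : ∀ i, a i = 1 ∨ a i = -1) (hrec : RSrec a) (k : ℤ) (N : ℕ) :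
    |Tsum a (4*k+3) N| ≤ |Tsum a k (N/4+1)| + |1 + (-1:ℝ)^k| * |Ssum a (k+1) (N/4+1)|
      + |Tsum a (k+1) (N/4+1)| + 11 := by
  have H := assemble (fun i => (-1:ℝ)^i * (a i * a (i + (4*k+3))))
    (fun j => -((-1:ℝ)^k) * ((-1:ℝ)^j * (a j * a (j+k)))
      - (1 + (-1:ℝ)^k) * (a j * a (j+(k+1))) + (-1:ℝ)^j * (a j * a (j+(k+1))))
    (fun i => abs_tcorr_le_one a ha (4*k+3) i) N (fun j => blockT3 a hrec j k)
  have Hg : ∑ j ∈ Icc (-((N/4+1 : ℕ):ℤ)) ((N/4+1 : ℕ):ℤ),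
        (-((-1:ℝ)^k) * ((-1:ℝ)^j * (a j * a (j+k)))
          - (1 + (-1:ℝ)^k) * (a j * a (j+(k+1))) + (-1:ℝ)^j * (a j * a (j+(k+1))))
      = -((-1:ℝ)^k) * Tsum a k (N/4+1) - (1 + (-1:ℝ)^k) * Ssum a (k+1) (N/4+1)
          + Tsum a (k+1) (N/4+1) := by
    rw [Ssum, Tsum, Tsum, Finset.mul_sum, Finset.mul_sum, ← Finset.sum_sub_distrib,
      ← Finset.sum_add_distrib]
  rw [Hg] at H
  refine abs_le_of_window H ?_
  have h2 := abs_add_le (-((-1:ℝ)^k) * Tsum a k (N/4+1))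
    (-((1 + (-1:ℝ)^k) * Ssum a (k+1) (N/4+1)))
  have h3 := abs_add_le (-((-1:ℝ)^k) * Tsum a k (N/4+1)
    - (1 + (-1:ℝ)^k) * Ssum a (k+1) (N/4+1)) (Tsum a (k+1) (N/4+1))
  rw [abs_neg] at h2
  rw [← sub_eq_add_neg] at h2
  have h4 : |-((-1:ℝ)^k) * Tsum a k (N/4+1)| = |Tsum a k (N/4+1)| := by
    rw [abs_mul, abs_neg, abs_neg_one_zpow, one_mul]
  have h5 : |(1 + (-1:ℝ)^k) * Ssum a (k+1) (N/4+1)|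
      = |1 + (-1:ℝ)^k| * |Ssum a (k+1) (N/4+1)| := abs_mul _ _
  linarith

end Est

section Main
variable (a : ℤ → ℝ)

lemma main_induction (ha : ∀ i, a i = 1 ∨ a i = -1) (hrec : RSrec a) :
    ∀ m : ℕ, Qp (fun N => Tsum a (m:ℤ) N) ∧ (m ≠ 0 → Qp (fun N => Ssum a (m:ℤ) N)) := by
  intro m
  induction m using Nat.strong_induction_on with
  | _ m ih =>
  rcases Nat.lt_or_ge m 2 with hm | hm
  · interval_cases m
    · -- m = 0
      refine ⟨?_, fun h => absurd rfl h⟩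
      refine Qp_of_le (g := fun _ => (11:ℝ)) (fun N => ?_) (Qp_const 11)
      have e : ((0:ℕ):ℤ) = 4*0 := by norm_num
      rw [e]
      exact estT0 a ha hrec 0 N
    · -- m = 1
      have hT0 : Qp (fun N => Tsum a ((0:ℕ):ℤ) N) := (ih 0 (by omega)).1
      have hT0' : Qp (fun N => Tsum a (0:ℤ) N) := by
        simpa using hT0
      have hcoef : |1 - (-1:ℝ)^(0:ℤ)| = 0 := by norm_num
      have hT1 : Qp (fun N => Tsum a ((1:ℕ):ℤ) N) := by
        refine Qp_selfref (g := fun N => |Tsum a (0:ℤ) (N/4+1)| + 11)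
          (fun N => by exact_mod_cast Tsum_triv_bound a ha _ N)
          (Qp_add (Qp_abs (Qp_shrink hT0')) (Qp_const 11)) (fun N => ?_)
        have h := estT1 a ha hrec 0 N
        rw [hcoef, zero_mul] at h
        have e1 : ((0:ℤ)+1) = ((1:ℕ):ℤ) := by norm_num
        have e2 : (4*(0:ℤ)+1) = ((1:ℕ):ℤ) := by norm_num
        rw [e1, e2] at h
        linarith
      refine ⟨hT1, fun _ => ?_⟩
      refine Qp_of_le (g := fun N => |Tsum a (0:ℤ) (N/4+1)| + |Tsum a ((1:ℕ):ℤ) (N/4+1)| + 11)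
        (fun N => ?_)
        (Qp_add (Qp_add (Qp_abs (Qp_shrink hT0')) (Qp_abs (Qp_shrink hT1))) (Qp_const 11))
      have h := estS1 a ha hrec 0 N
      rw [hcoef, zero_mul] at h
      have e1 : ((0:ℤ)+1) = ((1:ℕ):ℤ) := by norm_num
      have e2 : (4*(0:ℤ)+1) = ((1:ℕ):ℤ) := by norm_num
      rw [e1, e2] at h
      linarith
  · -- m ≥ 2
    set k : ℕ := m / 4 with hk
    have hs4 : m % 4 < 4 := Nat.mod_lt _ (by norm_num)
    have hmks : m = 4 * k + m % 4 := by omega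
    have hkm : k < m := by omega
    have hk1m : k + 1 < m := by omega
    obtain ⟨ihTk, ihSk⟩ := ih k hkm
    obtain ⟨ihTk1, ihSk1⟩ := ih (k+1) hk1m
    have ihSk1' : Qp (fun N => Ssum a ((k:ℤ)+1) N) := by
      have := ihSk1 (by omega)
      have e : (((k+1:ℕ)):ℤ) = (k:ℤ)+1 := by push_cast; ring
      rw [e] at this
      exact this
    have ihTk1' : Qp (fun N => Tsum a ((k:ℤ)+1) N) := by
      have e : (((k+1:ℕ)):ℤ) = (k:ℤ)+1 := by push_cast; ring
      rw [e] at ihTk1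
      exact ihTk1
    interval_cases h : m % 4
    · -- s = 0, k ≥ 1
      have hk1 : k ≠ 0 := by omega
      have em : ((m:ℕ):ℤ) = 4*(k:ℤ) := by
        have : m = 4*k := by omega
        rw [this]; push_cast; ring
      constructor
      · refine Qp_of_le (g := fun _ => (11:ℝ)) (fun N => ?_) (Qp_const 11)
        rw [em]; exact estT0 a ha hrec k N
      · intro _
        refine Qp_of_le
          (g := fun N => |2 + 2*(-1:ℝ)^(k:ℤ)| * |Ssum a (k:ℤ) (N/4+1)| + 11)
          (fun N => ?_)
          (Qp_add (Qp_smul _ (Qp_abs (Qp_shrink (ihSk hk1)))) (Qp_const 11))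
        rw [em]; exact estS0 a ha hrec k N
    · -- s = 1, k ≥ 1
      have hk1 : k ≠ 0 := by omega
      have em : ((m:ℕ):ℤ) = 4*(k:ℤ)+1 := by
        have : m = 4*k+1 := by omega
        rw [this]; push_cast; ring
      have hg : Qp (fun N => |1 - (-1:ℝ)^(k:ℤ)| * |Ssum a (k:ℤ) (N/4+1)|
          + |Tsum a (k:ℤ) (N/4+1)| + |Tsum a ((k:ℤ)+1) (N/4+1)| + 11) :=
        Qp_add (Qp_add (Qp_add (Qp_smul _ (Qp_abs (Qp_shrink (ihSk hk1))))
          (Qp_abs (Qp_shrink ihTk))) (Qp_abs (Qp_shrink ihTk1'))) (Qp_const 11)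
      constructor
      · refine Qp_of_le (fun N => ?_) hg
        rw [em]; exact estT1 a ha hrec k N
      · intro _
        refine Qp_of_le (fun N => ?_) hg
        rw [em]; exact estS1 a ha hrec k N
    · -- s = 2
      have em : ((m:ℕ):ℤ) = 4*(k:ℤ)+2 := by
        have : m = 4*k+2 := by omega
        rw [this]; push_cast; ring
      constructor
      · refine Qp_of_le
          (g := fun N => 2 * |Tsum a (k:ℤ) (N/4+1)| + 2 * |Tsum a ((k:ℤ)+1) (N/4+1)| + 11)
          (fun N => ?_)
          (Qp_add (Qp_add (Qp_smul _ (Qp_abs (Qp_shrink ihTk)))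
            (Qp_smul _ (Qp_abs (Qp_shrink ihTk1')))) (Qp_const 11))
        rw [em]; exact estT2 a ha hrec k N
      · intro _
        refine Qp_of_le (g := fun _ => (11:ℝ)) (fun N => ?_) (Qp_const 11)
        rw [em]; exact estS2 a ha hrec k N
    · -- s = 3
      have em : ((m:ℕ):ℤ) = 4*(k:ℤ)+3 := by
        have : m = 4*k+3 := by omega
        rw [this]; push_cast; ring
      have hg : Qp (fun N => |Tsum a (k:ℤ) (N/4+1)|
          + |1 + (-1:ℝ)^(k:ℤ)| * |Ssum a ((k:ℤ)+1) (N/4+1)|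
          + |Tsum a ((k:ℤ)+1) (N/4+1)| + 11) :=
        Qp_add (Qp_add (Qp_add (Qp_abs (Qp_shrink ihTk))
          (Qp_smul _ (Qp_abs (Qp_shrink ihSk1')))) (Qp_abs (Qp_shrink ihTk1')))
          (Qp_const 11)
      constructor
      · refine Qp_of_le (fun N => ?_) hg
        rw [em]; exact estT3 a ha hrec k N
      · intro _
        refine Qp_of_le (fun N => ?_) hg
        rw [em]; exact estS3 a ha hrec k N

end Main

section Fin
variable (a : ℤ → ℝ)

lemma Ssum_reindex (m : ℤ) (N : ℕ) :
    Ssum a (-m) N = ∑ j ∈ Icc (-(N:ℤ) + -m) ((N:ℤ) + -m), (a j * a (j + m)) := by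
  rw [Ssum, ← Finset.map_add_right_Icc, Finset.sum_map]
  apply Finset.sum_congr rfl
  intro i _
  simp only [addRightEmbedding_apply]
  rw [show i + -m + m = i from by ring]
  ring

lemma shifted_window_bound (F : ℤ → ℝ) (hF : ∀ i, |F i| ≤ 1) (N : ℕ) (m : ℤ) :
    |∑ j ∈ Icc (-(N:ℤ) + -m) ((N:ℤ) + -m), F j - ∑ j ∈ Icc (-(N:ℤ)) ((N:ℤ)), F j|
      ≤ 2 * |(m:ℝ)| := by
  classical
  set A := Icc (-(N:ℤ) + -m) ((N:ℤ) + -m) with hA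
  set B := Icc (-(N:ℤ)) ((N:ℤ)) with hB
  have hAsplit : ∑ j ∈ A ∩ B, F j + ∑ j ∈ A \ B, F j = ∑ j ∈ A, F j :=
    Finset.sum_inter_add_sum_sdiff A B F
  have hBsplit : ∑ j ∈ B ∩ A, F j + ∑ j ∈ B \ A, F j = ∑ j ∈ B, F j :=
    Finset.sum_inter_add_sum_sdiff B A F
  have hcomm : A ∩ B = B ∩ A := Finset.inter_comm A B
  have hdiff : ∑ j ∈ A, F j - ∑ j ∈ B, F j = ∑ j ∈ A \ B, F j - ∑ j ∈ B \ A, F j := by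
    rw [← hAsplit, ← hBsplit, hcomm]; ring
  rw [hdiff]
  have cardbound : ∀ (s : Finset ℤ), s.card ≤ m.natAbs → |∑ j ∈ s, F j| ≤ |(m:ℝ)| := by
    intro s hs
    calc |∑ j ∈ s, F j| ≤ ∑ j ∈ s, |F j| := Finset.abs_sum_le_sum_abs _ _
      _ ≤ s.card • (1:ℝ) := Finset.sum_le_card_nsmul _ _ 1 (fun x _ => hF x)
      _ ≤ |(m:ℝ)| := by
          rw [nsmul_eq_mul, mul_one]
          have h1 : (s.card : ℝ) ≤ (m.natAbs : ℝ) := by exact_mod_cast hs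
          have h2 : ((m.natAbs : ℕ) : ℝ) = |(m:ℝ)| := by
            rw [Nat.cast_natAbs, Int.cast_abs]
          linarith
  have hcardA : (A \ B).card ≤ m.natAbs := by
    have h1 := Finset.card_inter_add_card_sdiff A B
    have hcA : A.card = 2*N+1 := by
      rw [hA, Int.card_Icc]; omega
    rcases le_total 0 m with hm | hm
    · have hinter : A ∩ B = Icc (-(N:ℤ)) ((N:ℤ) + -m) := by
        rw [hA, hB]
        ext x
        simp only [Finset.mem_inter, mem_Icc]
        omega
      have hcI : (A ∩ B).card = (((N:ℤ) + -m + 1 - -(N:ℤ))).toNat := by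
        rw [hinter, Int.card_Icc]
      omega
    · have hinter : A ∩ B = Icc (-(N:ℤ) + -m) ((N:ℤ)) := by
        rw [hA, hB]
        ext x
        simp only [Finset.mem_inter, mem_Icc]
        omega
      have hcI : (A ∩ B).card = (((N:ℤ) + 1 - (-(N:ℤ) + -m))).toNat := by
        rw [hinter, Int.card_Icc]
      omega
  have hcardB : (B \ A).card ≤ m.natAbs := by
    have h1 := Finset.card_inter_add_card_sdiff B A
    have hcB : B.card = 2*N+1 := by
      rw [hB, Int.card_Icc]; omega
    rcases le_total 0 m with hm | hm
    · have hinter : B ∩ A = Icc (-(N:ℤ)) ((N:ℤ) + -m) := by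
        rw [hA, hB]
        ext x
        simp only [Finset.mem_inter, mem_Icc]
        omega
      have hcI : (B ∩ A).card = (((N:ℤ) + -m + 1 - -(N:ℤ))).toNat := by
        rw [hinter, Int.card_Icc]
      omega
    · have hinter : B ∩ A = Icc (-(N:ℤ) + -m) ((N:ℤ)) := by
        rw [hA, hB]
        ext x
        simp only [Finset.mem_inter, mem_Icc]
        omega
      have hcI : (B ∩ A).card = (((N:ℤ) + 1 - (-(N:ℤ) + -m))).toNat := by
        rw [hinter, Int.card_Icc]
      omega
  have b1 := cardbound _ hcardA
  have b2 := cardbound _ hcardB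
  have := abs_sub (∑ j ∈ A \ B, F j) (∑ j ∈ B \ A, F j)
  calc |∑ j ∈ A \ B, F j - ∑ j ∈ B \ A, F j|
      ≤ |∑ j ∈ A \ B, F j| + |∑ j ∈ B \ A, F j| := abs_sub _ _
    _ ≤ 2 * |(m:ℝ)| := by linarith

lemma Ssum_neg_bound (ha : ∀ i, a i = 1 ∨ a i = -1) (m : ℤ) (N : ℕ) :
    |Ssum a (-m) N| ≤ |Ssum a m N| + 2 * |(m:ℝ)| := by
  rw [Ssum_reindex]
  have h := shifted_window_bound (fun j => a j * a (j + m))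
    (fun i => abs_corr_le_one a ha m i) N m
  have h2 : |∑ j ∈ Icc (-(N:ℤ) + -m) ((N:ℤ) + -m), (a j * a (j + m))|
      ≤ |∑ j ∈ Icc (-(N:ℤ)) ((N:ℤ)), (a j * a (j + m))| + 2 * |(m:ℝ)| := by
    have := abs_sub_abs_le_abs_sub (∑ j ∈ Icc (-(N:ℤ) + -m) ((N:ℤ) + -m), (a j * a (j + m)))
      (∑ j ∈ Icc (-(N:ℤ)) ((N:ℤ)), (a j * a (j + m)))
    linarith
  exact h2

/-- from sublinearity to Cesàro convergence -/
lemma tendsto_of_Qp {f : ℕ → ℝ} (hf : Qp f) :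
    Tendsto (fun N : ℕ => (1 / (2 * (N:ℝ) + 1)) * f N) atTop (nhds 0) := by
  rw [Metric.tendsto_atTop]
  intro ε hε
  obtain ⟨C, hC⟩ := hf (ε/2) (by linarith)
  obtain ⟨N0, hN0⟩ := exists_nat_ge (2*|C|/ε + 1)
  refine ⟨N0, fun N hN => ?_⟩
  have hNR : (N0:ℝ) ≤ N := by exact_mod_cast hN
  have hpos : (0:ℝ) < 2 * (N:ℝ) + 1 := by positivity
  rw [Real.dist_eq, sub_zero, abs_mul, abs_of_pos (by positivity : (0:ℝ) < 1 / (2 * (N:ℝ) + 1))]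
  rw [div_mul_eq_mul_div, one_mul, div_lt_iff₀ hpos]
  have h1 := hC N
  have h2 : 2*|C|/ε + 1 ≤ (N:ℝ) := le_trans hN0 hNR
  have h3 : 2*|C| ≤ ε * ((N:ℝ) - 1) := by
    rw [div_add' _ _ _ (ne_of_gt hε)] at h2
    have := (div_le_iff₀ hε).mp h2
    nlinarith
  have h4 : C ≤ |C| := le_abs_self C
  nlinarith
end Fin


/-- The autocorrelation of the balanced bi-infinite Rudin–Shapiro sequence is `δ_{m,0}`. -/
theorem rudin_shapiro_autocorrelation (a : ℤ → ℝ)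
    (ha : ∀ i, a i = 1 ∨ a i = -1)
    (hrec : ∀ m : ℤ, a (4 * m) = a m ∧ a (4 * m + 1) = a m ∧
      a (4 * m + 2) = (-1 : ℝ) ^ m * a m ∧ a (4 * m + 3) = -((-1 : ℝ) ^ m) * a m)
    (m : ℤ) :
    Tendsto (fun N : ℕ =>
        (1 / (2 * (N : ℝ) + 1)) *
          ∑ i ∈ Finset.Icc (-(N : ℤ)) (N : ℤ), a i * a (i + m))
      atTop (nhds (if m = 0 then 1 else 0)) := by
  have hrec' : RSrec a := hrec
  by_cases hm : m = 0
  · subst hm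
    simp only [if_pos rfl]
    have hsum : ∀ N : ℕ, ∑ i ∈ Finset.Icc (-(N:ℤ)) (N:ℤ), a i * a (i + 0) = (2*(N:ℝ)+1) := by
      intro N
      have h1 : ∀ i ∈ Finset.Icc (-(N:ℤ)) (N:ℤ), a i * a (i+0) = 1 := by
        intro i _
        rw [add_zero]
        rcases ha i with h|h <;> rw [h] <;> norm_num
      rw [Finset.sum_congr rfl h1, Finset.sum_const, Int.card_Icc]
      have h2 : ((N:ℤ)+1 - -(N:ℤ)).toNat = 2*N+1 := by omega
      rw [h2, nsmul_eq_mul, mul_one]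
      push_cast
      ring
    have heq : (fun N : ℕ => (1 / (2 * (N : ℝ) + 1)) *
        ∑ i ∈ Finset.Icc (-(N : ℤ)) (N : ℤ), a i * a (i + 0)) = fun _ : ℕ => (1:ℝ) := by
      funext N
      rw [hsum N]
      have : (2*(N:ℝ)+1) ≠ 0 := by positivity
      field_simp
    rw [heq]
    exact tendsto_const_nhds
  · simp only [if_neg hm]
    have hQ : Qp (fun N => Ssum a m N) := by
      rcases lt_or_gt_of_ne hm with hneg | hpos
      · set m' : ℕ := (-m).toNat with hm'def
        have hm'pos : m' ≠ 0 := by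
          simp only [hm'def]
          omega
        have hcast : ((m':ℕ):ℤ) = -m := by
          simp only [hm'def]
          omega
        have hQ' := (main_induction a ha hrec' m').2 hm'pos
        rw [hcast] at hQ'
        refine Qp_of_le (fun N => ?_) (Qp_add (Qp_abs hQ') (Qp_const (2*|((-m : ℤ):ℝ)|)))
        have h := Ssum_neg_bound a ha (-m) N
        rw [neg_neg] at h
        exact h
      · set m' : ℕ := m.toNat with hm'def
        have hm'pos : m' ≠ 0 := by
          simp only [hm'def]
          omega
        have hcast : ((m':ℕ):ℤ) = m := by
          simp only [hm'def]
          omega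
        have hQ' := (main_induction a ha hrec' m').2 hm'pos
        rw [hcast] at hQ'
        exact hQ'
    exact tendsto_of_Qp hQ
end RS
end

section
/- All 3-point correlation functions of the balanced Rudin–Shapiro sequence vanish: for all m_1, m_2 ∈ ℤ, η^{(3)}(m_1, m_2) = lim_{N→∞} (1/(2N+1)) Σ_{i=−N}^{N} a_i a_{i+m_1} a_{i+m_2} = 0, and likewise θ^{(3)}(m_1, m_2) = lim_{N→∞} (1/(2N+1)) Σ_{i=−N}^{N} (−1)^i a_i a_{i+m_1} a_{i+m_2} = 0. -/
open Filter Finset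

namespace RS3

noncomputable def S (a : ℤ → ℝ) (e n0 n1 n2 L : ℤ) (len : ℕ) : ℝ :=
  ∑ j ∈ Finset.range len,
    (-1:ℝ)^(e * (L + j)) * (a (L + j + n0) * (a (L + j + n1) * a (L + j + n2)))

noncomputable def co (m : ℤ) : ℝ :=
  (if m % 4 = 3 then (-1:ℝ) else 1) * (if 2 ≤ m % 4 then (-1:ℝ)^(m/4) else 1)

def ep (m : ℤ) : ℤ := if 2 ≤ m % 4 then 1 else 0

def Ee (l n0 n1 n2 : ℤ) : ℤ := (ep (l+n0) + ep (l+n1) + ep (l+n2)) % 2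

noncomputable def sg (e l n0 n1 n2 : ℤ) : ℝ :=
  (-1:ℝ)^(e*l) * (co (l+n0) * (co (l+n1) * co (l+n2)))

variable {a : ℤ → ℝ}

lemma neg_one_zpow_add (x y : ℤ) : (-1:ℝ)^(x+y) = (-1:ℝ)^x * (-1:ℝ)^y :=
  zpow_add₀ (by norm_num) x y

lemma neg_one_zpow_mod2 (s x : ℤ) : (-1:ℝ)^(s*x) = (-1:ℝ)^((s % 2)*x) := by
  have h : s*x = 2*((s/2)*x) + (s % 2)*x := by
    have h2 := Int.mul_ediv_add_emod s 2
    linear_combination (-x) * h2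
  rw [h, neg_one_zpow_add, zpow_mul]
  norm_num

lemma key (hrec : ∀ m : ℤ, a (4 * m) = a m ∧ a (4 * m + 1) = a m ∧
      a (4 * m + 2) = (-1 : ℝ) ^ m * a m ∧ a (4 * m + 3) = -((-1 : ℝ) ^ m) * a m)
    (x m : ℤ) : a (4*x + m) = co m * ((-1:ℝ)^(ep m * x) * a (x + m/4)) := by
  have hd := Int.mul_ediv_add_emod m 4
  have hr : m % 4 = 0 ∨ m % 4 = 1 ∨ m % 4 = 2 ∨ m % 4 = 3 := by omega
  rcases hr with h | h | h | h
  · have h2 : 4*x + m = 4*(x + m/4) := by omega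
    rw [h2, (hrec (x + m/4)).1, co, ep, h]
    norm_num
  · have h2 : 4*x + m = 4*(x + m/4) + 1 := by omega
    rw [h2, (hrec (x + m/4)).2.1, co, ep, h]
    norm_num
  · have h2 : 4*x + m = 4*(x + m/4) + 2 := by omega
    rw [h2, (hrec (x + m/4)).2.2.1, co, ep, h, neg_one_zpow_add]
    norm_num
    ring
  · have h2 : 4*x + m = 4*(x + m/4) + 3 := by omega
    rw [h2, (hrec (x + m/4)).2.2.2, co, ep, h, neg_one_zpow_add]
    norm_num
    ring


lemma pw (hrec : ∀ m : ℤ, a (4 * m) = a m ∧ a (4 * m + 1) = a m ∧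
      a (4 * m + 2) = (-1 : ℝ) ^ m * a m ∧ a (4 * m + 3) = -((-1 : ℝ) ^ m) * a m)
    (e n0 n1 n2 l x : ℤ) :
    (-1:ℝ)^(e*(4*x+l)) * (a (4*x+l+n0) * (a (4*x+l+n1) * a (4*x+l+n2))) =
    sg e l n0 n1 n2 * ((-1:ℝ)^(Ee l n0 n1 n2 * x) *
      (a (x + (l+n0)/4) * (a (x + (l+n1)/4) * a (x + (l+n2)/4)))) := by
  have k0 := key hrec x (l+n0)
  have k1 := key hrec x (l+n1)
  have k2 := key hrec x (l+n2)
  have e0 : 4*x+l+n0 = 4*x+(l+n0) := by ring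
  have e1 : 4*x+l+n1 = 4*x+(l+n1) := by ring
  have e2 : 4*x+l+n2 = 4*x+(l+n2) := by ring
  rw [e0, e1, e2, k0, k1, k2]
  have hp : (-1:ℝ)^(e*(4*x+l)) = (-1:ℝ)^(e*l) := by
    have : e*(4*x+l) = 4*(e*x) + e*l := by ring
    rw [this, neg_one_zpow_add, zpow_mul]
    norm_num
  rw [hp]
  have hq : (-1:ℝ)^(ep (l+n0) * x) * ((-1:ℝ)^(ep (l+n1) * x) * (-1:ℝ)^(ep (l+n2) * x))
      = (-1:ℝ)^(Ee l n0 n1 n2 * x) := by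
    rw [Ee, ← neg_one_zpow_mod2]
    rw [← neg_one_zpow_add, ← neg_one_zpow_add]
    ring_nf
  rw [sg, ← hq]
  ring

lemma Ssucc (e n0 n1 n2 L : ℤ) (n : ℕ) :
    S a e n0 n1 n2 L (n+1) = S a e n0 n1 n2 L n +
      (-1:ℝ)^(e * (L + n)) * (a (L + n + n0) * (a (L + n + n1) * a (L + n + n2))) := by
  rw [S, Finset.sum_range_succ, S]

lemma Ssplit (e n0 n1 n2 L : ℤ) (m k : ℕ) :
    S a e n0 n1 n2 L (m + k) = S a e n0 n1 n2 L m + S a e n0 n1 n2 (L + m) k := by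
  induction k with
  | zero => simp [S]
  | succ k ih =>
      rw [show m + (k+1) = (m+k)+1 from rfl, Ssucc, ih, Ssucc]
      push_cast
      ring_nf

lemma quarter (hrec : ∀ m : ℤ, a (4 * m) = a m ∧ a (4 * m + 1) = a m ∧
      a (4 * m + 2) = (-1 : ℝ) ^ m * a m ∧ a (4 * m + 3) = -((-1 : ℝ) ^ m) * a m)
    (e n0 n1 n2 K : ℤ) (M : ℕ) :
    S a e n0 n1 n2 (4*K) (4*M) =
      sg e 0 n0 n1 n2 * S a (Ee 0 n0 n1 n2) ((0+n0)/4) ((0+n1)/4) ((0+n2)/4) K M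
    + sg e 1 n0 n1 n2 * S a (Ee 1 n0 n1 n2) ((1+n0)/4) ((1+n1)/4) ((1+n2)/4) K M
    + sg e 2 n0 n1 n2 * S a (Ee 2 n0 n1 n2) ((2+n0)/4) ((2+n1)/4) ((2+n2)/4) K M
    + sg e 3 n0 n1 n2 * S a (Ee 3 n0 n1 n2) ((3+n0)/4) ((3+n1)/4) ((3+n2)/4) K M := by
  induction M with
  | zero => simp [S]
  | succ M ih =>
      have hL : 4*(M+1) = (4*M) + 1 + 1 + 1 + 1 := by ring
      have p0 := pw hrec e n0 n1 n2 0 (K+M)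
      have p1 := pw hrec e n0 n1 n2 1 (K+M)
      have p2 := pw hrec e n0 n1 n2 2 (K+M)
      have p3 := pw hrec e n0 n1 n2 3 (K+M)
      rw [hL, Ssucc, Ssucc, Ssucc, Ssucc, ih, Ssucc, Ssucc, Ssucc, Ssucc]
      push_cast at p0 p1 p2 p3 ⊢
      ring_nf at p0 p1 p2 p3 ⊢
      linarith [p0, p1, p2, p3]


lemma abs_neg_one_zpow (z : ℤ) : |(-1:ℝ)^z| = 1 := by
  rcases Int.even_or_odd z with h|h
  · rw [h.neg_one_zpow]; norm_num
  · rw [h.neg_one_zpow]; norm_num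

lemma Sabs (ha : ∀ i, a i = 1 ∨ a i = -1) (e n0 n1 n2 L : ℤ) (n : ℕ) :
    |S a e n0 n1 n2 L n| ≤ n := by
  have habs : ∀ i, |a i| = 1 := fun i => by rcases ha i with h|h <;> simp [h]
  refine (Finset.abs_sum_le_sum_abs _ _).trans ?_
  have h1 : ∀ j ∈ Finset.range n,
      |(-1:ℝ)^(e * (L + j)) * (a (L + j + n0) * (a (L + j + n1) * a (L + j + n2)))| ≤ 1 := by
    intro j _
    rw [abs_mul, abs_mul, abs_mul, abs_neg_one_zpow, habs, habs, habs]
    norm_num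
  calc ∑ j ∈ Finset.range n, |(-1:ℝ)^(e * (L + j)) * (a (L + j + n0) * (a (L + j + n1) * a (L + j + n2)))|
      ≤ ∑ _j ∈ Finset.range n, (1:ℝ) := Finset.sum_le_sum h1
    _ = n := by simp

lemma co_abs (m : ℤ) : |co m| = 1 := by
  rw [co, abs_mul]
  split_ifs <;> simp [abs_neg_one_zpow]

lemma sg_abs (e l n0 n1 n2 : ℤ) : |sg e l n0 n1 n2| = 1 := by
  rw [sg, abs_mul, abs_mul, abs_mul, abs_neg_one_zpow, co_abs, co_abs, co_abs]
  norm_num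

/-- sup over core types and all starting points -/
noncomputable def F (a : ℤ → ℝ) (n : ℕ) : ℝ :=
  sSup {x : ℝ | ∃ e n0 n1 n2 L : ℤ, (e = 0 ∨ e = 1) ∧ |n0| ≤ 1 ∧ |n1| ≤ 1 ∧ |n2| ≤ 1 ∧
    x = |S a e n0 n1 n2 L n|}

lemma F_bdd (ha : ∀ i, a i = 1 ∨ a i = -1) (n : ℕ) :
    BddAbove {x : ℝ | ∃ e n0 n1 n2 L : ℤ, (e = 0 ∨ e = 1) ∧ |n0| ≤ 1 ∧ |n1| ≤ 1 ∧ |n2| ≤ 1 ∧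
    x = |S a e n0 n1 n2 L n|} := by
  refine ⟨(n:ℝ), ?_⟩
  rintro x ⟨e,n0,n1,n2,L,he,h0,h1,h2,rfl⟩
  exact Sabs ha e n0 n1 n2 L n

lemma le_F (ha : ∀ i, a i = 1 ∨ a i = -1) {e n0 n1 n2 : ℤ} (he : e = 0 ∨ e = 1)
    (h0 : |n0| ≤ 1) (h1 : |n1| ≤ 1) (h2 : |n2| ≤ 1) (L : ℤ) (n : ℕ) :
    |S a e n0 n1 n2 L n| ≤ F a n :=
  le_csSup (F_bdd ha n) ⟨e,n0,n1,n2,L,he,h0,h1,h2,rfl⟩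

lemma F_nonneg (ha : ∀ i, a i = 1 ∨ a i = -1) (n : ℕ) : 0 ≤ F a n :=
  (abs_nonneg _).trans (le_F ha (e:=0) (n0:=0) (n1:=0) (n2:=0) (Or.inl rfl) (by norm_num) (by norm_num) (by norm_num) 0 n)

lemma F_le (ha : ∀ i, a i = 1 ∨ a i = -1) (n : ℕ) : F a n ≤ n := by
  apply Real.sSup_le
  · rintro x ⟨e,n0,n1,n2,L,he,h0,h1,h2,rfl⟩
    exact Sabs ha e n0 n1 n2 L n
  · positivity

/-- sup over starting points, fixed type -/
noncomputable def G (a : ℤ → ℝ) (e n0 n1 n2 : ℤ) (n : ℕ) : ℝ :=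
  sSup {x : ℝ | ∃ L : ℤ, x = |S a e n0 n1 n2 L n|}

lemma G_bdd (ha : ∀ i, a i = 1 ∨ a i = -1) (e n0 n1 n2 : ℤ) (n : ℕ) :
    BddAbove {x : ℝ | ∃ L : ℤ, x = |S a e n0 n1 n2 L n|} := by
  refine ⟨(n:ℝ), ?_⟩
  rintro x ⟨L, rfl⟩
  exact Sabs ha e n0 n1 n2 L n

lemma le_G (ha : ∀ i, a i = 1 ∨ a i = -1) (e n0 n1 n2 L : ℤ) (n : ℕ) :
    |S a e n0 n1 n2 L n| ≤ G a e n0 n1 n2 n :=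
  le_csSup (G_bdd ha e n0 n1 n2 n) ⟨L, rfl⟩

lemma G_nonneg (ha : ∀ i, a i = 1 ∨ a i = -1) (e n0 n1 n2 : ℤ) (n : ℕ) :
    0 ≤ G a e n0 n1 n2 n :=
  (abs_nonneg _).trans (le_G ha e n0 n1 n2 0 n)

lemma G_le_F (ha : ∀ i, a i = 1 ∨ a i = -1) {e n0 n1 n2 : ℤ} (he : e = 0 ∨ e = 1)
    (h0 : |n0| ≤ 1) (h1 : |n1| ≤ 1) (h2 : |n2| ≤ 1) (n : ℕ) :
    G a e n0 n1 n2 n ≤ F a n := by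
  apply Real.sSup_le
  · rintro x ⟨L, rfl⟩
    exact le_F ha he h0 h1 h2 L n
  · exact F_nonneg ha n


set_option maxHeartbeats 4000000 in
lemma core_bound (ha : ∀ i, a i = 1 ∨ a i = -1)
    (hrec : ∀ m : ℤ, a (4 * m) = a m ∧ a (4 * m + 1) = a m ∧
      a (4 * m + 2) = (-1 : ℝ) ^ m * a m ∧ a (4 * m + 3) = -((-1 : ℝ) ^ m) * a m)
    {e n0 n1 n2 : ℤ} (he : e = 0 ∨ e = 1)
    (h0 : |n0| ≤ 1) (h1 : |n1| ≤ 1) (h2 : |n2| ≤ 1) (K : ℤ) (M : ℕ) :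
    |S a e n0 n1 n2 (4*(4*K)) (4*(4*M))| ≤ 6 * F a M := by
  have hFn := F_nonneg ha M
  have hb : ∀ e' n0' n1' n2' : ℤ, (e' = 0 ∨ e' = 1) → |n0'| ≤ 1 → |n1'| ≤ 1 → |n2'| ≤ 1 →
      -(F a M) ≤ S a e' n0' n1' n2' K M ∧ S a e' n0' n1' n2' K M ≤ F a M := by
    intro e' n0' n1' n2' he' h0' h1' h2'
    exact abs_le.1 (le_F ha he' h0' h1' h2' K M)
  have hc1 := hb 0 (-1) (-1) (-1) (by norm_num) (by norm_num) (by norm_num) (by norm_num)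
  have hc2 := hb 0 (-1) (-1) (0) (by norm_num) (by norm_num) (by norm_num) (by norm_num)
  have hc3 := hb 0 (-1) (-1) (1) (by norm_num) (by norm_num) (by norm_num) (by norm_num)
  have hc4 := hb 0 (-1) (0) (-1) (by norm_num) (by norm_num) (by norm_num) (by norm_num)
  have hc5 := hb 0 (-1) (0) (0) (by norm_num) (by norm_num) (by norm_num) (by norm_num)
  have hc6 := hb 0 (-1) (0) (1) (by norm_num) (by norm_num) (by norm_num) (by norm_num)
  have hc7 := hb 0 (-1) (1) (-1) (by norm_num) (by norm_num) (by norm_num) (by norm_num)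
  have hc8 := hb 0 (-1) (1) (0) (by norm_num) (by norm_num) (by norm_num) (by norm_num)
  have hc9 := hb 0 (-1) (1) (1) (by norm_num) (by norm_num) (by norm_num) (by norm_num)
  have hc10 := hb 0 (0) (-1) (-1) (by norm_num) (by norm_num) (by norm_num) (by norm_num)
  have hc11 := hb 0 (0) (-1) (0) (by norm_num) (by norm_num) (by norm_num) (by norm_num)
  have hc12 := hb 0 (0) (-1) (1) (by norm_num) (by norm_num) (by norm_num) (by norm_num)
  have hc13 := hb 0 (0) (0) (-1) (by norm_num) (by norm_num) (by norm_num) (by norm_num)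
  have hc14 := hb 0 (0) (0) (0) (by norm_num) (by norm_num) (by norm_num) (by norm_num)
  have hc15 := hb 0 (0) (0) (1) (by norm_num) (by norm_num) (by norm_num) (by norm_num)
  have hc16 := hb 0 (0) (1) (-1) (by norm_num) (by norm_num) (by norm_num) (by norm_num)
  have hc17 := hb 0 (0) (1) (0) (by norm_num) (by norm_num) (by norm_num) (by norm_num)
  have hc18 := hb 0 (0) (1) (1) (by norm_num) (by norm_num) (by norm_num) (by norm_num)
  have hc19 := hb 0 (1) (-1) (-1) (by norm_num) (by norm_num) (by norm_num) (by norm_num)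
  have hc20 := hb 0 (1) (-1) (0) (by norm_num) (by norm_num) (by norm_num) (by norm_num)
  have hc21 := hb 0 (1) (-1) (1) (by norm_num) (by norm_num) (by norm_num) (by norm_num)
  have hc22 := hb 0 (1) (0) (-1) (by norm_num) (by norm_num) (by norm_num) (by norm_num)
  have hc23 := hb 0 (1) (0) (0) (by norm_num) (by norm_num) (by norm_num) (by norm_num)
  have hc24 := hb 0 (1) (0) (1) (by norm_num) (by norm_num) (by norm_num) (by norm_num)
  have hc25 := hb 0 (1) (1) (-1) (by norm_num) (by norm_num) (by norm_num) (by norm_num)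
  have hc26 := hb 0 (1) (1) (0) (by norm_num) (by norm_num) (by norm_num) (by norm_num)
  have hc27 := hb 0 (1) (1) (1) (by norm_num) (by norm_num) (by norm_num) (by norm_num)
  have hc28 := hb 1 (-1) (-1) (-1) (by norm_num) (by norm_num) (by norm_num) (by norm_num)
  have hc29 := hb 1 (-1) (-1) (0) (by norm_num) (by norm_num) (by norm_num) (by norm_num)
  have hc30 := hb 1 (-1) (-1) (1) (by norm_num) (by norm_num) (by norm_num) (by norm_num)
  have hc31 := hb 1 (-1) (0) (-1) (by norm_num) (by norm_num) (by norm_num) (by norm_num)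
  have hc32 := hb 1 (-1) (0) (0) (by norm_num) (by norm_num) (by norm_num) (by norm_num)
  have hc33 := hb 1 (-1) (0) (1) (by norm_num) (by norm_num) (by norm_num) (by norm_num)
  have hc34 := hb 1 (-1) (1) (-1) (by norm_num) (by norm_num) (by norm_num) (by norm_num)
  have hc35 := hb 1 (-1) (1) (0) (by norm_num) (by norm_num) (by norm_num) (by norm_num)
  have hc36 := hb 1 (-1) (1) (1) (by norm_num) (by norm_num) (by norm_num) (by norm_num)
  have hc37 := hb 1 (0) (-1) (-1) (by norm_num) (by norm_num) (by norm_num) (by norm_num)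
  have hc38 := hb 1 (0) (-1) (0) (by norm_num) (by norm_num) (by norm_num) (by norm_num)
  have hc39 := hb 1 (0) (-1) (1) (by norm_num) (by norm_num) (by norm_num) (by norm_num)
  have hc40 := hb 1 (0) (0) (-1) (by norm_num) (by norm_num) (by norm_num) (by norm_num)
  have hc41 := hb 1 (0) (0) (0) (by norm_num) (by norm_num) (by norm_num) (by norm_num)
  have hc42 := hb 1 (0) (0) (1) (by norm_num) (by norm_num) (by norm_num) (by norm_num)
  have hc43 := hb 1 (0) (1) (-1) (by norm_num) (by norm_num) (by norm_num) (by norm_num)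
  have hc44 := hb 1 (0) (1) (0) (by norm_num) (by norm_num) (by norm_num) (by norm_num)
  have hc45 := hb 1 (0) (1) (1) (by norm_num) (by norm_num) (by norm_num) (by norm_num)
  have hc46 := hb 1 (1) (-1) (-1) (by norm_num) (by norm_num) (by norm_num) (by norm_num)
  have hc47 := hb 1 (1) (-1) (0) (by norm_num) (by norm_num) (by norm_num) (by norm_num)
  have hc48 := hb 1 (1) (-1) (1) (by norm_num) (by norm_num) (by norm_num) (by norm_num)
  have hc49 := hb 1 (1) (0) (-1) (by norm_num) (by norm_num) (by norm_num) (by norm_num)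
  have hc50 := hb 1 (1) (0) (0) (by norm_num) (by norm_num) (by norm_num) (by norm_num)
  have hc51 := hb 1 (1) (0) (1) (by norm_num) (by norm_num) (by norm_num) (by norm_num)
  have hc52 := hb 1 (1) (1) (-1) (by norm_num) (by norm_num) (by norm_num) (by norm_num)
  have hc53 := hb 1 (1) (1) (0) (by norm_num) (by norm_num) (by norm_num) (by norm_num)
  have hc54 := hb 1 (1) (1) (1) (by norm_num) (by norm_num) (by norm_num) (by norm_num)
  obtain ⟨l0, u0⟩ := abs_le.1 h0
  obtain ⟨l1, u1⟩ := abs_le.1 h1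
  obtain ⟨l2, u2⟩ := abs_le.1 h2
  rcases he with rfl | rfl <;>
  interval_cases n0 <;> interval_cases n1 <;> interval_cases n2 <;>
  · rw [quarter hrec, quarter hrec, quarter hrec, quarter hrec, quarter hrec]
    norm_num [sg, co, ep, Ee]
    ring_nf
    rw [abs_le]
    constructor <;> linarith [hc1.1, hc2.1, hc3.1, hc4.1, hc5.1, hc6.1, hc7.1, hc8.1, hc9.1, hc10.1, hc11.1, hc12.1, hc13.1, hc14.1, hc15.1, hc16.1, hc17.1, hc18.1, hc19.1, hc20.1, hc21.1, hc22.1, hc23.1, hc24.1, hc25.1, hc26.1, hc27.1, hc28.1, hc29.1, hc30.1, hc31.1, hc32.1, hc33.1, hc34.1, hc35.1, hc36.1, hc37.1, hc38.1, hc39.1, hc40.1, hc41.1, hc42.1, hc43.1, hc44.1, hc45.1, hc46.1, hc47.1, hc48.1, hc49.1, hc50.1, hc51.1, hc52.1, hc53.1, hc54.1, hc1.2, hc2.2, hc3.2, hc4.2, hc5.2, hc6.2, hc7.2, hc8.2, hc9.2, hc10.2, hc11.2, hc12.2, hc13.2, hc14.2, hc15.2, hc16.2, hc17.2, hc18.2,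 hc19.2, hc20.2, hc21.2, hc22.2, hc23.2, hc24.2, hc25.2, hc26.2, hc27.2, hc28.2, hc29.2, hc30.2, hc31.2, hc32.2, hc33.2, hc34.2, hc35.2, hc36.2, hc37.2, hc38.2, hc39.2, hc40.2, hc41.2, hc42.2, hc43.2, hc44.2, hc45.2, hc46.2, hc47.2, hc48.2, hc49.2, hc50.2, hc51.2, hc52.2, hc53.2, hc54.2]

lemma Frec (ha : ∀ i, a i = 1 ∨ a i = -1)
    (hrec : ∀ m : ℤ, a (4 * m) = a m ∧ a (4 * m + 1) = a m ∧
      a (4 * m + 2) = (-1 : ℝ) ^ m * a m ∧ a (4 * m + 3) = -((-1 : ℝ) ^ m) * a m)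
    (n : ℕ) : F a n ≤ 6 * F a (n/16 + 2) + 48 := by
  set M : ℕ := n/16 + 2 with hM
  apply Real.sSup_le
  · rintro x ⟨e,n0,n1,n2,L,he,h0,h1,h2,rfl⟩
    set K : ℤ := L / 16 with hK
    set p : ℕ := (L - 16*K).toNat with hp
    have hpz : (p:ℤ) = L - 16*K := Int.toNat_of_nonneg (by omega)
    have hp16 : p < 16 := by
      have : (p:ℤ) < 16 := by omega
      exact_mod_cast this
    have h16M : n + 17 ≤ 16*M ∧ 16*M ≤ n + 47 := by
      constructor <;> omega
    have hpn : 16*M = p + (n + (16*M - (p+n))) := by omega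
    set t : ℕ := 16*M - (p+n) with ht
    have hdec : S a e n0 n1 n2 (16*K) (16*M)
        = S a e n0 n1 n2 (16*K) p + (S a e n0 n1 n2 (16*K + p) n
          + S a e n0 n1 n2 (16*K + p + n) t) := by
      conv_lhs => rw [hpn]
      rw [Ssplit, Ssplit]
    have hLK : (16*K : ℤ) + p = L := by omega
    rw [hLK] at hdec
    have hX : S a e n0 n1 n2 L n = S a e n0 n1 n2 (16*K) (16*M)
          - S a e n0 n1 n2 (16*K) p - S a e n0 n1 n2 (L + n) t := by
      rw [hdec]; ring
    have b1 := Sabs ha e n0 n1 n2 (16*K) p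
    have b2 := Sabs ha e n0 n1 n2 (L + n) t
    have hcb : |S a e n0 n1 n2 (16*K) (16*M)| ≤ 6 * F a M := by
      have e1 : (16:ℤ)*K = 4*(4*K) := by ring
      have e2 : 16*M = 4*(4*M) := by ring
      rw [e1, e2]
      exact core_bound ha hrec he h0 h1 h2 K M
    have htri : |S a e n0 n1 n2 L n| ≤ |S a e n0 n1 n2 (16*K) (16*M)|
        + |S a e n0 n1 n2 (16*K) p| + |S a e n0 n1 n2 (L + n) t| := by
      rw [hX]
      calc |S a e n0 n1 n2 (16*K) (16*M) - S a e n0 n1 n2 (16*K) p - S a e n0 n1 n2 (L + n) t|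
          ≤ |S a e n0 n1 n2 (16*K) (16*M) - S a e n0 n1 n2 (16*K) p| + |S a e n0 n1 n2 (L + n) t| :=
            abs_sub _ _
        _ ≤ _ := by
            have := abs_sub (S a e n0 n1 n2 (16*K) (16*M)) (S a e n0 n1 n2 (16*K) p)
            linarith
    have hpt : (p:ℝ) + (t:ℝ) ≤ 47 := by
      have : p + t ≤ 47 := by omega
      exact_mod_cast (by exact_mod_cast Nat.cast_le.2 this : ((p+t:ℕ):ℝ) ≤ (47:ℝ))
    linarith
  · have := F_nonneg ha M
    linarith
lemma abs_add_four (x y z w : ℝ) : |x + y + z + w| ≤ |x| + |y| + |z| + |w| := by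
  calc |x + y + z + w| ≤ |x + y + z| + |w| := abs_add_le _ _
    _ ≤ |x + y| + |z| + |w| := by linarith [abs_add_le (x+y) z]
    _ ≤ |x| + |y| + |z| + |w| := by linarith [abs_add_le x y]

lemma decay (f : ℕ → ℝ) (h0 : ∀ n, 0 ≤ f n) (h1 : ∀ n, f n ≤ n)
    (h2 : ∀ n, f n ≤ 6 * f (n/16+2) + 48) :
    Tendsto (fun n : ℕ => f n / n) atTop (nhds 0) := by
  have key : ∀ k : ℕ, ∃ C : ℝ, 0 ≤ C ∧ ∀ n : ℕ, f n ≤ (3/8)^k * n + C := by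
    intro k
    induction k with
    | zero => exact ⟨0, le_refl 0, fun n => by simpa using h1 n⟩
    | succ k ih =>
      obtain ⟨C, hC0, hC⟩ := ih
      refine ⟨6*C + 60, by linarith, fun n => ?_⟩
      have hdiv : ((n/16 + 2 : ℕ) : ℝ) ≤ (n:ℝ)/16 + 2 := by
        push_cast
        have h := Nat.cast_div_le (m := n) (n := 16) (α := ℝ)
        push_cast at h
        linarith
      have hk1 : (0:ℝ) ≤ (3/8)^k := by positivity
      have hk2 : ((3:ℝ)/8)^k ≤ 1 := pow_le_one₀ (by norm_num) (by norm_num)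
      have hC2 := hC (n/16+2)
      have h3 := h2 n
      have h4 : f n ≤ 6 * ((3/8)^k * ((n:ℝ)/16 + 2) + C) + 48 := by nlinarith
      have h5 : 6 * ((3/8)^k * ((n:ℝ)/16 + 2) + C) + 48
          = (3/8)^(k+1) * n + (12*(3/8)^k + 6*C + 48) := by ring
      rw [h5] at h4
      nlinarith
  rw [Metric.tendsto_atTop]
  intro ε hε
  obtain ⟨k, hk⟩ := exists_pow_lt_of_lt_one (by linarith : (0:ℝ) < ε/2) (by norm_num : (3:ℝ)/8 < 1)
  obtain ⟨C, hC0, hC⟩ := key k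
  refine ⟨⌈2*C/ε⌉₊ + 1, fun n hn => ?_⟩
  have hn1 : 1 ≤ n := le_trans (Nat.le_add_left 1 _) hn
  have hnR : (0:ℝ) < n := by exact_mod_cast hn1
  rw [Real.dist_eq, sub_zero, abs_of_nonneg (div_nonneg (h0 n) hnR.le)]
  have h1' : f n / n ≤ (3/8)^k + C/n := by
    have hCn := hC n
    rw [div_le_iff₀ hnR]
    have : ((3:ℝ)/8)^k * n + C = ((3/8)^k + C/n) * n := by
      field_simp
    linarith [hCn, this ▸ hCn]
  have h2' : C / n < ε/2 := by
    rw [div_lt_iff₀ hnR]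
    have hle : 2*C/ε ≤ (⌈2*C/ε⌉₊ : ℝ) := Nat.le_ceil _
    have hlt : ((⌈2*C/ε⌉₊ : ℝ)) < n := by
      have : ((⌈2*C/ε⌉₊ + 1 : ℕ) : ℝ) ≤ n := by exact_mod_cast hn
      push_cast at this
      linarith
    have h6 : 2*C/ε < n := lt_of_le_of_lt hle hlt
    have h7 : 2*C < n * ε := by
      rw [div_lt_iff₀ hε] at h6
      linarith
    linarith
  linarith

lemma Grec (ha : ∀ i, a i = 1 ∨ a i = -1)
    (hrec : ∀ m : ℤ, a (4 * m) = a m ∧ a (4 * m + 1) = a m ∧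
      a (4 * m + 2) = (-1 : ℝ) ^ m * a m ∧ a (4 * m + 3) = -((-1 : ℝ) ^ m) * a m)
    (e n0 n1 n2 : ℤ) (n : ℕ) :
    G a e n0 n1 n2 n ≤
      G a (Ee 0 n0 n1 n2) ((0+n0)/4) ((0+n1)/4) ((0+n2)/4) (n/4+2)
    + G a (Ee 1 n0 n1 n2) ((1+n0)/4) ((1+n1)/4) ((1+n2)/4) (n/4+2)
    + G a (Ee 2 n0 n1 n2) ((2+n0)/4) ((2+n1)/4) ((2+n2)/4) (n/4+2)
    + G a (Ee 3 n0 n1 n2) ((3+n0)/4) ((3+n1)/4) ((3+n2)/4) (n/4+2) + 12 := by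
  set M : ℕ := n/4 + 2 with hM
  apply Real.sSup_le
  · rintro x ⟨L, rfl⟩
    set K : ℤ := L / 4 with hK
    set p : ℕ := (L - 4*K).toNat with hp
    have hpz : (p:ℤ) = L - 4*K := Int.toNat_of_nonneg (by omega)
    have hp4 : p < 4 := by
      have : (p:ℤ) < 4 := by omega
      exact_mod_cast this
    have h4M : n + 5 ≤ 4*M ∧ 4*M ≤ n + 11 := by constructor <;> omega
    have hpn : 4*M = p + (n + (4*M - (p+n))) := by omega
    set t : ℕ := 4*M - (p+n) with ht
    have hdec : S a e n0 n1 n2 (4*K) (4*M)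
        = S a e n0 n1 n2 (4*K) p + (S a e n0 n1 n2 (4*K + p) n
          + S a e n0 n1 n2 (4*K + p + n) t) := by
      conv_lhs => rw [hpn]
      rw [Ssplit, Ssplit]
    have hLK : (4*K : ℤ) + p = L := by omega
    rw [hLK] at hdec
    have hX : S a e n0 n1 n2 L n = S a e n0 n1 n2 (4*K) (4*M)
          - S a e n0 n1 n2 (4*K) p - S a e n0 n1 n2 (L + n) t := by
      rw [hdec]; ring
    have b1 := Sabs ha e n0 n1 n2 (4*K) p
    have b2 := Sabs ha e n0 n1 n2 (L + n) t
    have hq := quarter hrec e n0 n1 n2 K M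
    have habs4 : |S a e n0 n1 n2 (4*K) (4*M)| ≤
        G a (Ee 0 n0 n1 n2) ((0+n0)/4) ((0+n1)/4) ((0+n2)/4) M
      + G a (Ee 1 n0 n1 n2) ((1+n0)/4) ((1+n1)/4) ((1+n2)/4) M
      + G a (Ee 2 n0 n1 n2) ((2+n0)/4) ((2+n1)/4) ((2+n2)/4) M
      + G a (Ee 3 n0 n1 n2) ((3+n0)/4) ((3+n1)/4) ((3+n2)/4) M := by
      rw [hq]
      have g0 := le_G ha (Ee 0 n0 n1 n2) ((0+n0)/4) ((0+n1)/4) ((0+n2)/4) K M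
      have g1 := le_G ha (Ee 1 n0 n1 n2) ((1+n0)/4) ((1+n1)/4) ((1+n2)/4) K M
      have g2 := le_G ha (Ee 2 n0 n1 n2) ((2+n0)/4) ((2+n1)/4) ((2+n2)/4) K M
      have g3 := le_G ha (Ee 3 n0 n1 n2) ((3+n0)/4) ((3+n1)/4) ((3+n2)/4) K M
      have s0 := sg_abs e 0 n0 n1 n2
      have s1 := sg_abs e 1 n0 n1 n2
      have s2 := sg_abs e 2 n0 n1 n2
      have s3 := sg_abs e 3 n0 n1 n2
      calc |sg e 0 n0 n1 n2 * S a (Ee 0 n0 n1 n2) ((0+n0)/4) ((0+n1)/4) ((0+n2)/4) K M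
            + sg e 1 n0 n1 n2 * S a (Ee 1 n0 n1 n2) ((1+n0)/4) ((1+n1)/4) ((1+n2)/4) K M
            + sg e 2 n0 n1 n2 * S a (Ee 2 n0 n1 n2) ((2+n0)/4) ((2+n1)/4) ((2+n2)/4) K M
            + sg e 3 n0 n1 n2 * S a (Ee 3 n0 n1 n2) ((3+n0)/4) ((3+n1)/4) ((3+n2)/4) K M|
          ≤ |sg e 0 n0 n1 n2 * S a (Ee 0 n0 n1 n2) ((0+n0)/4) ((0+n1)/4) ((0+n2)/4) K M|
            + |sg e 1 n0 n1 n2 * S a (Ee 1 n0 n1 n2) ((1+n0)/4) ((1+n1)/4) ((1+n2)/4) K M|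
            + |sg e 2 n0 n1 n2 * S a (Ee 2 n0 n1 n2) ((2+n0)/4) ((2+n1)/4) ((2+n2)/4) K M|
            + |sg e 3 n0 n1 n2 * S a (Ee 3 n0 n1 n2) ((3+n0)/4) ((3+n1)/4) ((3+n2)/4) K M| := by
            exact abs_add_four _ _ _ _
        _ ≤ _ := by
            rw [abs_mul, abs_mul, abs_mul, abs_mul, s0, s1, s2, s3]
            simp only [one_mul]
            linarith
    have hpt : (p:ℝ) + (t:ℝ) ≤ 11 := by
      have : p + t ≤ 11 := by omega
      exact_mod_cast (Nat.cast_le.2 this : ((p+t:ℕ):ℝ) ≤ ((11:ℕ):ℝ))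
    have htri : |S a e n0 n1 n2 L n| ≤ |S a e n0 n1 n2 (4*K) (4*M)| + ((p:ℝ) + t) := by
      rw [hX]
      calc |S a e n0 n1 n2 (4*K) (4*M) - S a e n0 n1 n2 (4*K) p - S a e n0 n1 n2 (L + n) t|
          ≤ |S a e n0 n1 n2 (4*K) (4*M) - S a e n0 n1 n2 (4*K) p| + |S a e n0 n1 n2 (L + n) t| :=
            abs_sub _ _
        _ ≤ _ := by
            have := abs_sub (S a e n0 n1 n2 (4*K) (4*M)) (S a e n0 n1 n2 (4*K) p)
            linarith
    linarith
  · have g0 := G_nonneg ha (Ee 0 n0 n1 n2) ((0+n0)/4) ((0+n1)/4) ((0+n2)/4) M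
    have g1 := G_nonneg ha (Ee 1 n0 n1 n2) ((1+n0)/4) ((1+n1)/4) ((1+n2)/4) M
    have g2 := G_nonneg ha (Ee 2 n0 n1 n2) ((2+n0)/4) ((2+n1)/4) ((2+n2)/4) M
    have g3 := G_nonneg ha (Ee 3 n0 n1 n2) ((3+n0)/4) ((3+n1)/4) ((3+n2)/4) M
    linarith

lemma phi_tendsto : Tendsto (fun n : ℕ => n/4 + 2) atTop atTop := by
  apply Filter.tendsto_atTop_atTop.2
  intro b
  exact ⟨4*b, fun n hn => by omega⟩

set_option maxHeartbeats 1000000 in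
lemma main (ha : ∀ i, a i = 1 ∨ a i = -1)
    (hrec : ∀ m : ℤ, a (4 * m) = a m ∧ a (4 * m + 1) = a m ∧
      a (4 * m + 2) = (-1 : ℝ) ^ m * a m ∧ a (4 * m + 3) = -((-1 : ℝ) ^ m) * a m)
    (μ : ℕ) : ∀ e n0 n1 n2 : ℤ, (e = 0 ∨ e = 1) →
    n0.natAbs + n1.natAbs + n2.natAbs ≤ μ →
    Tendsto (fun n : ℕ => G a e n0 n1 n2 n / n) atTop (nhds 0) := by
  induction μ using Nat.strong_induction_on with
  | _ μ ih =>
  intro e n0 n1 n2 he hμ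
  by_cases hcore : n0.natAbs ≤ 1 ∧ n1.natAbs ≤ 1 ∧ n2.natAbs ≤ 1
  · have h0 : |n0| ≤ 1 := by rw [Int.abs_eq_natAbs]; exact_mod_cast hcore.1
    have h1 : |n1| ≤ 1 := by rw [Int.abs_eq_natAbs]; exact_mod_cast hcore.2.1
    have h2 : |n2| ≤ 1 := by rw [Int.abs_eq_natAbs]; exact_mod_cast hcore.2.2
    have hF := decay (F a) (F_nonneg ha) (F_le ha) (Frec ha hrec)
    apply squeeze_zero (g := fun n : ℕ => F a n / n)
    · intro n; exact div_nonneg (G_nonneg ha _ _ _ _ n) (Nat.cast_nonneg n)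
    · intro n
      rcases Nat.eq_zero_or_pos n with h|h
      · simp [h]
      · have hn : (0:ℝ) < n := by exact_mod_cast h
        exact div_le_div_of_nonneg_right (G_le_F ha he h0 h1 h2 n) hn.le
    · exact hF
  · have hbig : 2 ≤ n0.natAbs ∨ 2 ≤ n1.natAbs ∨ 2 ≤ n2.natAbs := by
      by_contra hnb
      push_neg at hnb
      exact hcore ⟨by omega, by omega, by omega⟩
    have hch : ∀ l : ℤ, 0 ≤ l → l ≤ 3 →
        Tendsto (fun n : ℕ =>
          G a (Ee l n0 n1 n2) ((l+n0)/4) ((l+n1)/4) ((l+n2)/4) (n/4+2) / ((n/4+2 : ℕ) : ℝ))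
          atTop (nhds 0) := by
      intro l hl0 hl3
      have hEe : Ee l n0 n1 n2 = 0 ∨ Ee l n0 n1 n2 = 1 := Int.emod_two_eq_zero_or_one _
      have hm : ((l+n0)/4).natAbs + ((l+n1)/4).natAbs + ((l+n2)/4).natAbs < μ := by omega
      exact (ih _ hm _ _ _ _ hEe le_rfl).comp phi_tendsto
    have hg : Tendsto (fun n : ℕ =>
        G a (Ee 0 n0 n1 n2) ((0+n0)/4) ((0+n1)/4) ((0+n2)/4) (n/4+2) / ((n/4+2 : ℕ) : ℝ)
        + G a (Ee 1 n0 n1 n2) ((1+n0)/4) ((1+n1)/4) ((1+n2)/4) (n/4+2) / ((n/4+2 : ℕ) : ℝ)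
        + G a (Ee 2 n0 n1 n2) ((2+n0)/4) ((2+n1)/4) ((2+n2)/4) (n/4+2) / ((n/4+2 : ℕ) : ℝ)
        + G a (Ee 3 n0 n1 n2) ((3+n0)/4) ((3+n1)/4) ((3+n2)/4) (n/4+2) / ((n/4+2 : ℕ) : ℝ)
        + 12 / (n:ℝ)) atTop (nhds 0) := by
      have h12 : Tendsto (fun n : ℕ => 12 / (n:ℝ)) atTop (nhds 0) :=
        tendsto_const_div_atTop_nhds_zero_nat 12
      have := ((((hch 0 (by norm_num) (by norm_num)).add
        (hch 1 (by norm_num) (by norm_num))).add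
        (hch 2 (by norm_num) (by norm_num))).add
        (hch 3 (by norm_num) (by norm_num))).add h12
      simpa using this
    refine squeeze_zero' ?_ ?_ hg
    · filter_upwards with n
      exact div_nonneg (G_nonneg ha _ _ _ _ n) (Nat.cast_nonneg n)
    · filter_upwards [eventually_ge_atTop 8] with n hn
      have hGr := Grec ha hrec e n0 n1 n2 n
      have hφle : ((n/4+2 : ℕ) : ℝ) ≤ (n:ℝ) := by
        have : n/4+2 ≤ n := by omega
        exact_mod_cast this
      have hφpos : (0:ℝ) < ((n/4+2 : ℕ) : ℝ) := by positivity
      have hnpos : (0:ℝ) < (n:ℝ) := by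
        have : 0 < n := by omega
        exact_mod_cast this
      have key : ∀ x : ℝ, 0 ≤ x → x / (n:ℝ) ≤ x / ((n/4+2 : ℕ) : ℝ) := by
        intro x hx
        exact div_le_div_of_nonneg_left hx hφpos hφle
      have k0 := key _ (G_nonneg ha (Ee 0 n0 n1 n2) ((0+n0)/4) ((0+n1)/4) ((0+n2)/4) (n/4+2))
      have k1 := key _ (G_nonneg ha (Ee 1 n0 n1 n2) ((1+n0)/4) ((1+n1)/4) ((1+n2)/4) (n/4+2))
      have k2 := key _ (G_nonneg ha (Ee 2 n0 n1 n2) ((2+n0)/4) ((2+n1)/4) ((2+n2)/4) (n/4+2))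
      have k3 := key _ (G_nonneg ha (Ee 3 n0 n1 n2) ((3+n0)/4) ((3+n1)/4) ((3+n2)/4) (n/4+2))
      have hdivn : G a e n0 n1 n2 n / (n:ℝ) ≤
          (G a (Ee 0 n0 n1 n2) ((0+n0)/4) ((0+n1)/4) ((0+n2)/4) (n/4+2)
          + G a (Ee 1 n0 n1 n2) ((1+n0)/4) ((1+n1)/4) ((1+n2)/4) (n/4+2)
          + G a (Ee 2 n0 n1 n2) ((2+n0)/4) ((2+n1)/4) ((2+n2)/4) (n/4+2)
          + G a (Ee 3 n0 n1 n2) ((3+n0)/4) ((3+n1)/4) ((3+n2)/4) (n/4+2) + 12) / (n:ℝ) :=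
        div_le_div_of_nonneg_right hGr hnpos.le
      rw [add_div, add_div, add_div, add_div] at hdivn
      calc G a e n0 n1 n2 n / (n:ℝ) ≤ _ := hdivn
        _ ≤ _ := by
            have h12' : (12:ℝ)/(n:ℝ) ≤ 12/(n:ℝ) := le_refl _
            linarith [k0, k1, k2, k3]

lemma Icc_eq_map (N : ℕ) : Finset.Icc (-(N:ℤ)) N =
    Finset.map ⟨fun j : ℕ => -(N:ℤ) + j, fun x y h => by simpa using h⟩
      (Finset.range (2*N+1)) := by
  ext i
  simp only [Finset.mem_Icc, Finset.mem_map, Finset.mem_range, Function.Embedding.coeFn_mk, DFunLike.coe]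
  constructor
  · rintro ⟨hl, hr⟩
    exact ⟨(i + N).toNat, by omega, by omega⟩
  · rintro ⟨j, hj, rfl⟩
    omega

end RS3

open RS3 in
/-- All 3-point correlation functions of the balanced Rudin–Shapiro sequence vanish. -/
theorem rudin_shapiro_three_point_vanish (a : ℤ → ℝ)
    (ha : ∀ i, a i = 1 ∨ a i = -1)
    (hrec : ∀ m : ℤ, a (4 * m) = a m ∧ a (4 * m + 1) = a m ∧
      a (4 * m + 2) = (-1 : ℝ) ^ m * a m ∧ a (4 * m + 3) = -((-1 : ℝ) ^ m) * a m)
    (m₁ m₂ : ℤ) :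
    Tendsto (fun N : ℕ =>
        (1 / (2 * (N : ℝ) + 1)) *
          ∑ i ∈ Finset.Icc (-(N : ℤ)) (N : ℤ), a i * a (i + m₁) * a (i + m₂))
      atTop (nhds 0) ∧
    Tendsto (fun N : ℕ =>
        (1 / (2 * (N : ℝ) + 1)) *
          ∑ i ∈ Finset.Icc (-(N : ℤ)) (N : ℤ),
            (-1 : ℝ) ^ i * a i * a (i + m₁) * a (i + m₂))
      atTop (nhds 0) := by
  have htwo : Tendsto (fun N : ℕ => 2*N+1) atTop atTop := by
    apply Filter.tendsto_atTop_atTop.2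
    intro b
    exact ⟨b, fun n hn => by omega⟩
  constructor
  · have hG := (main ha hrec _ 0 0 m₁ m₂ (Or.inl rfl) le_rfl).comp htwo
    refine squeeze_zero_norm (a := fun N : ℕ => G a 0 0 m₁ m₂ (2*N+1) / ((2*N+1 : ℕ) : ℝ)) (fun N => ?_) hG
    have hsum : ∑ i ∈ Finset.Icc (-(N:ℤ)) N, a i * a (i + m₁) * a (i + m₂)
        = S a 0 0 m₁ m₂ (-(N:ℤ)) (2*N+1) := by
      rw [Icc_eq_map N, Finset.sum_map, S]
      apply Finset.sum_congr rfl
      intro j _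
      simp only [Function.Embedding.coeFn_mk, DFunLike.coe, zero_mul, zpow_zero, one_mul, add_zero]
      ring
    rw [Real.norm_eq_abs, hsum, abs_mul]
    have hpos : (0:ℝ) < 2*(N:ℝ)+1 := by positivity
    have hcast : ((2*N+1 : ℕ) : ℝ) = 2*(N:ℝ)+1 := by push_cast; ring
    rw [abs_of_pos (by positivity : (0:ℝ) < 1/(2*(N:ℝ)+1))]
    show 1/(2*(N:ℝ)+1) * |S a 0 0 m₁ m₂ (-(N:ℤ)) (2*N+1)| ≤
      G a 0 0 m₁ m₂ (2*N+1) / ((2*N+1 : ℕ) : ℝ)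
    rw [hcast]
    have hle := le_G ha 0 0 m₁ m₂ (-(N:ℤ)) (2*N+1)
    calc 1/(2*(N:ℝ)+1) * |S a 0 0 m₁ m₂ (-(N:ℤ)) (2*N+1)|
        ≤ 1/(2*(N:ℝ)+1) * G a 0 0 m₁ m₂ (2*N+1) :=
          mul_le_mul_of_nonneg_left hle (by positivity)
      _ = G a 0 0 m₁ m₂ (2*N+1) / (2*(N:ℝ)+1) := by ring
  · have hG := (main ha hrec _ 1 0 m₁ m₂ (Or.inr rfl) le_rfl).comp htwo
    refine squeeze_zero_norm (a := fun N : ℕ => G a 1 0 m₁ m₂ (2*N+1) / ((2*N+1 : ℕ) : ℝ)) (fun N => ?_) hG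
    have hsum : ∑ i ∈ Finset.Icc (-(N:ℤ)) N, (-1:ℝ)^i * a i * a (i + m₁) * a (i + m₂)
        = S a 1 0 m₁ m₂ (-(N:ℤ)) (2*N+1) := by
      rw [Icc_eq_map N, Finset.sum_map, S]
      apply Finset.sum_congr rfl
      intro j _
      simp only [Function.Embedding.coeFn_mk, DFunLike.coe, one_mul, add_zero]
      ring
    rw [Real.norm_eq_abs, hsum, abs_mul]
    have hpos : (0:ℝ) < 2*(N:ℝ)+1 := by positivity
    have hcast : ((2*N+1 : ℕ) : ℝ) = 2*(N:ℝ)+1 := by push_cast; ring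
    rw [abs_of_pos (by positivity : (0:ℝ) < 1/(2*(N:ℝ)+1))]
    show 1/(2*(N:ℝ)+1) * |S a 1 0 m₁ m₂ (-(N:ℤ)) (2*N+1)| ≤
      G a 1 0 m₁ m₂ (2*N+1) / ((2*N+1 : ℕ) : ℝ)
    rw [hcast]
    have hle := le_G ha 1 0 m₁ m₂ (-(N:ℤ)) (2*N+1)
    calc 1/(2*(N:ℝ)+1) * |S a 1 0 m₁ m₂ (-(N:ℤ)) (2*N+1)|
        ≤ 1/(2*(N:ℝ)+1) * G a 1 0 m₁ m₂ (2*N+1) :=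
          mul_le_mul_of_nonneg_left hle (by positivity)
      _ = G a 1 0 m₁ m₂ (2*N+1) / (2*(N:ℝ)+1) := by ring
end

section
/- For the balanced Rudin–Shapiro sequence, for every n ≥ 2 and every (r_1,…,r_{n−1}) ∈ {0,1}^{n−1} with r = r_1 + … + r_{n−1}, the correlation function satisfies η^{(n)}(r_1,…,r_{n−1}) = 0 if n or r is odd, and η^{(n)}(r_1,…,r_{n−1}) = 1 if both n and r are even; moreover θ^{(n)}(r_1,…,r_{n−1}) = 0 in all cases. -/
open Filter Finset


private lemma rs_Icc_insert_right (A B : ℤ) (h : A ≤ B + 1) :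
    insert (B+1) (Finset.Icc A B) = Finset.Icc A (B+1) := by
  ext x; simp only [Finset.mem_insert, Finset.mem_Icc]; omega

private lemma rs_Icc_insert_left (A B : ℤ) (h : A ≤ B) :
    insert A (Finset.Icc (A+1) B) = Finset.Icc A B := by
  ext x; simp only [Finset.mem_insert, Finset.mem_Icc]; omega

private lemma rs_sum_insert_right (f : ℤ → ℝ) (A B : ℤ) (h : A ≤ B + 1) :
    ∑ i ∈ Finset.Icc A (B+1), f i = (∑ i ∈ Finset.Icc A B, f i) + f (B+1) := by
  rw [← rs_Icc_insert_right A B h, Finset.sum_insert (by simp only [Finset.mem_Icc]; omega)]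
  ring

private lemma rs_sum_insert_left (f : ℤ → ℝ) (A B : ℤ) (h : A ≤ B) :
    ∑ i ∈ Finset.Icc A B, f i = f A + ∑ i ∈ Finset.Icc (A+1) B, f i := by
  rw [← rs_Icc_insert_left A B h, Finset.sum_insert (by simp only [Finset.mem_Icc]; omega)]

private lemma rs_neg_pow_sum (A : ℤ) (k : ℕ) :
    ∑ m ∈ Finset.Icc A (A + k), (-1:ℝ)^m = ((-1)^A + (-1)^(A+(k:ℤ)))/2 := by
  induction k with
  | zero => simp
  | succ k ih =>
    push_cast
    rw [show A + ((k:ℤ)+1) = (A + k) + 1 by ring,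
      rs_sum_insert_right _ A (A+k) (by omega), ih,
      zpow_add₀ (by norm_num : (-1:ℝ) ≠ 0) (A+(k:ℤ)) 1, zpow_one]
    ring

private lemma rs_neg_pow_sum_abs (A B : ℤ) : |∑ m ∈ Finset.Icc A B, (-1:ℝ)^m| ≤ 1 := by
  rcases le_or_gt A B with h | h
  · obtain ⟨k, rfl⟩ : ∃ k : ℕ, B = A + k := ⟨(B - A).toNat, by omega⟩
    rw [rs_neg_pow_sum]
    rcases Int.even_or_odd A with hA | hA <;> rcases Int.even_or_odd (A + (k:ℤ)) with hB | hB <;>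
      rw [hA.neg_one_zpow, hB.neg_one_zpow] <;> norm_num
  · rw [Finset.Icc_eq_empty (by omega)]; simp

private lemma rs_sum_blocks (f : ℤ → ℝ) (A B : ℤ) :
    ∑ i ∈ Finset.Icc (4*A) (4*B+3), f i
      = ∑ m ∈ Finset.Icc A B, (f (4*m) + f (4*m+1) + f (4*m+2) + f (4*m+3)) := by
  have hU : Finset.Icc (4*A) (4*B+3)
      = (Finset.Icc A B).biUnion (fun m => Finset.Icc (4*m) (4*m+3)) := by
    ext i
    simp only [Finset.mem_biUnion, Finset.mem_Icc]
    constructor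
    · intro h; exact ⟨i / 4, by omega, by omega⟩
    · rintro ⟨m, h1, h2⟩; omega
  rw [hU, Finset.sum_biUnion]
  · refine Finset.sum_congr rfl (fun m _ => ?_)
    rw [show (4*m+3) = (4*m+2)+1 by ring, rs_sum_insert_right _ _ _ (by omega),
      show (4*m+2) = (4*m+1)+1 by ring, rs_sum_insert_right _ _ _ (by omega),
      show (4*m+1) = (4*m)+1 by ring, rs_sum_insert_right _ _ _ (by omega)]
    simp
  · intro x _ y _ hxy
    apply Finset.disjoint_left.mpr
    intro i hi hi'
    simp only [Finset.mem_Icc] at hi hi'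
    omega

private lemma rs_lin_atTop (c d : ℝ) (hc : 0 < c) :
    Tendsto (fun N : ℕ => c*(N:ℝ)+d) atTop atTop :=
  tendsto_atTop_add_const_right _ d
    ((tendsto_natCast_atTop_atTop (R := ℝ)).const_mul_atTop hc)

private lemma rs_div_lin_zero (D c d : ℝ) (hc : 0 < c) :
    Tendsto (fun N : ℕ => D / (c*(N:ℝ)+d)) atTop (nhds 0) :=
  Tendsto.div_atTop tendsto_const_nhds (rs_lin_atTop c d hc)

private lemma rs_tendsto_of_close (u v : ℕ → ℝ) (X D : ℝ)
    (h : ∀ N : ℕ, |u N - v N| ≤ D / (2*(N:ℝ)+1))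
    (hu : Tendsto u atTop (nhds X)) : Tendsto v atTop (nhds X) := by
  have h0 : Tendsto (fun N => u N - v N) atTop (nhds 0) :=
    squeeze_zero_norm h (rs_div_lin_zero D 2 1 (by norm_num))
  have := hu.sub h0
  simpa using this

private lemma rs_key (f g e : ℤ → ℝ) (c X Y G E : ℝ) (hG : 0 ≤ G)
    (hf : ∀ i, |f i| ≤ 1) (hg : ∀ i, |g i| ≤ G)
    (he : ∀ A B : ℤ, |∑ m ∈ Finset.Icc A B, e m| ≤ E)
    (hblock : ∀ m : ℤ, f (4*m) + f (4*m+1) + f (4*m+2) + f (4*m+3) = c * g m + e m)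
    (hX : Tendsto (fun N : ℕ =>
      (1/(2*(N:ℝ)+1)) * ∑ i ∈ Finset.Icc (-(N:ℤ)) (N:ℤ), f i) atTop (nhds X))
    (hY : Tendsto (fun N : ℕ =>
      (1/(2*(N:ℝ)+1)) * ∑ m ∈ Finset.Icc (-(N:ℤ)) (N:ℤ), g m) atTop (nhds Y)) :
    X = c * Y / 4 := by
  set s : ℕ → ℝ := fun N => (1/(2*(N:ℝ)+1)) * ∑ i ∈ Finset.Icc (-(N:ℤ)) (N:ℤ), f i with hs
  set t : ℕ → ℝ := fun N => (1/(2*(N:ℝ)+1)) * ∑ m ∈ Finset.Icc (-(N:ℤ)) (N:ℤ), g m with ht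
  set R : ℕ → ℝ := fun N =>
    c * g (-(N:ℤ)-1) + (∑ m ∈ Finset.Icc (-(N:ℤ)-1) (N:ℤ), e m) - f (-(4*(N:ℤ)+4)) with hR
  -- the subsequence 4N+3
  have hcomp : Tendsto (fun N : ℕ => s (4*N+3)) atTop (nhds X) :=
    hX.comp (tendsto_atTop_mono (fun n : ℕ => by simp only [id_eq]; omega) tendsto_id)
  -- identity
  have hid : ∀ N : ℕ, s (4*N+3)
      = ((2*(N:ℝ)+1)/(8*(N:ℝ)+7)) * c * t N + R N / (8*(N:ℝ)+7) := by
    intro N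
    have hcast : ((4*N+3 : ℕ) : ℤ) = 4*(N:ℤ)+3 := by push_cast; ring
    have hcastR : (2*((4*N+3 : ℕ) : ℝ)+1) = 8*(N:ℝ)+7 := by push_cast; ring
    have h1 : ∑ i ∈ Finset.Icc (-(4*(N:ℤ)+3)) (4*(N:ℤ)+3), f i
        = c * (∑ m ∈ Finset.Icc (-(N:ℤ)) (N:ℤ), g m) + R N := by
      have hfull : ∑ i ∈ Finset.Icc (4*(-(N:ℤ)-1)) (4*(N:ℤ)+3), f i
          = ∑ m ∈ Finset.Icc (-(N:ℤ)-1) (N:ℤ), (c * g m + e m) := by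
        rw [rs_sum_blocks f (-(N:ℤ)-1) (N:ℤ)]
        exact Finset.sum_congr rfl (fun m _ => hblock m)
      have hsplit : ∑ i ∈ Finset.Icc (4*(-(N:ℤ)-1)) (4*(N:ℤ)+3), f i
          = f (-(4*(N:ℤ)+4)) + ∑ i ∈ Finset.Icc (-(4*(N:ℤ)+3)) (4*(N:ℤ)+3), f i := by
        rw [show (4*(-(N:ℤ)-1)) = (-(4*(N:ℤ)+4)) by ring,
          rs_sum_insert_left f _ _ (by omega),
          show (-(4*(N:ℤ)+4))+1 = (-(4*(N:ℤ)+3)) by ring]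
      have hg1 : ∑ m ∈ Finset.Icc (-(N:ℤ)-1) (N:ℤ), g m
          = g (-(N:ℤ)-1) + ∑ m ∈ Finset.Icc (-(N:ℤ)) (N:ℤ), g m := by
        rw [rs_sum_insert_left g _ _ (by omega), show (-(N:ℤ)-1)+1 = (-(N:ℤ)) by ring]
      have := hfull
      rw [Finset.sum_add_distrib, ← Finset.mul_sum, hg1] at this
      rw [hR]
      simp only
      linarith [hsplit, this]
    rw [hs]
    simp only
    rw [hcast, hcastR, show (-(4*(N:ℤ)+3)) = -((4:ℤ)*(N:ℤ)+3) by ring] at *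
    rw [h1, ht]
    simp only
    have h2 : (2*(N:ℝ)+1) ≠ 0 := by positivity
    have h3 : (8*(N:ℝ)+7) ≠ 0 := by positivity
    field_simp
  -- limits of the RHS
  have hquot : Tendsto (fun N : ℕ => (2*(N:ℝ)+1)/(8*(N:ℝ)+7)) atTop (nhds (1/4)) := by
    have heq : ∀ N : ℕ, (2*(N:ℝ)+1)/(8*(N:ℝ)+7) = 1/4 - (3/4) / (8*(N:ℝ)+7) := by
      intro N
      have h3 : (8*(N:ℝ)+7) ≠ 0 := by positivity
      field_simp
      ring
    rw [show (1/4 : ℝ) = 1/4 - 0 by ring]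
    exact Tendsto.congr (fun N => (heq N).symm)
      (tendsto_const_nhds.sub (rs_div_lin_zero (3/4) 8 7 (by norm_num)))
  have h1 : Tendsto (fun N : ℕ => ((2*(N:ℝ)+1)/(8*(N:ℝ)+7)) * c * t N) atTop
      (nhds (1/4 * c * Y)) := (hquot.mul_const c).mul hY
  have h2 : Tendsto (fun N : ℕ => R N / (8*(N:ℝ)+7)) atTop (nhds 0) := by
    have hbnd : ∀ N : ℕ, ‖R N / (8*(N:ℝ)+7)‖ ≤ ( |c| * G + E + 1) / (8*(N:ℝ)+7) := by
      intro N
      have hb : |R N| ≤ |c| * G + E + 1 := by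
        rw [hR]
        simp only
        have h4 := hg (-(N:ℤ)-1)
        have h5 := he (-(N:ℤ)-1) (N:ℤ)
        have h6 := hf (-(4*(N:ℤ)+4))
        have habs : |c * g (-(N:ℤ)-1)| ≤ |c| * G := by
          rw [abs_mul]; gcongr
        calc |c * g (-(N:ℤ)-1) + (∑ m ∈ Finset.Icc (-(N:ℤ)-1) (N:ℤ), e m) - f (-(4*(N:ℤ)+4))|
            ≤ |c * g (-(N:ℤ)-1) + (∑ m ∈ Finset.Icc (-(N:ℤ)-1) (N:ℤ), e m)| + |f (-(4*(N:ℤ)+4))| :=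
              abs_sub _ _
          _ ≤ |c * g (-(N:ℤ)-1)| + |∑ m ∈ Finset.Icc (-(N:ℤ)-1) (N:ℤ), e m| + |f (-(4*(N:ℤ)+4))| := by
              gcongr; exact abs_add_le _ _
          _ ≤ |c| * G + E + 1 := by gcongr
      have hpos : (0:ℝ) < 8*(N:ℝ)+7 := by positivity
      rw [norm_div, Real.norm_eq_abs, Real.norm_eq_abs, abs_of_pos hpos]
      gcongr
    exact squeeze_zero_norm hbnd (rs_div_lin_zero _ 8 7 (by norm_num))
  have hlim : Tendsto (fun N : ℕ => s (4*N+3)) atTop (nhds (1/4 * c * Y + 0)) := by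
    exact Tendsto.congr (fun N => (hid N).symm) (h1.add h2)
  have := tendsto_nhds_unique hcomp hlim
  linarith

private lemma rs_z4 (m : ℤ) : (-1:ℝ)^(4*m) = 1 := by rw [zpow_mul]; norm_num
private lemma rs_z1 (m : ℤ) : (-1:ℝ)^(4*m+1) = -1 := by
  rw [zpow_add₀ (by norm_num : (-1:ℝ) ≠ 0), rs_z4]; norm_num
private lemma rs_z2 (m : ℤ) : (-1:ℝ)^(4*m+2) = 1 := by
  rw [zpow_add₀ (by norm_num : (-1:ℝ) ≠ 0), rs_z4]; norm_num
private lemma rs_z3 (m : ℤ) : (-1:ℝ)^(4*m+3) = -1 := by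
  rw [zpow_add₀ (by norm_num : (-1:ℝ) ≠ 0), rs_z4]; norm_num
private lemma rs_zpm (m : ℤ) : (-1:ℝ)^m = 1 ∨ (-1:ℝ)^m = -1 := by
  rcases Int.even_or_odd m with h | h
  · left; exact h.neg_one_zpow
  · right; exact h.neg_one_zpow

private lemma rs_zabs (m : ℤ) : |(-1:ℝ)^m| = 1 := by
  rcases rs_zpm m with h | h <;> rw [h] <;> norm_num

private lemma rs_abs_mul_le_one {x y : ℝ} (hx : |x| ≤ 1) (hy : |y| ≤ 1) : |x*y| ≤ 1 := by
  rw [abs_mul]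
  exact mul_le_one₀ hx (abs_nonneg _) hy

section lims
variable (a : ℤ → ℝ) (ha : ∀ i, a i = 1 ∨ a i = -1)
  (hrec : ∀ m : ℤ, a (4 * m) = a m ∧ a (4 * m + 1) = a m ∧
      a (4 * m + 2) = (-1 : ℝ) ^ m * a m ∧ a (4 * m + 3) = -((-1 : ℝ) ^ m) * a m)

include ha in
private lemma rs_habs : ∀ i, |a i| ≤ 1 := by
  intro i; rcases ha i with h | h <;> rw [h] <;> norm_num

include ha hrec in
private lemma rs_limA (X : ℝ)
    (hX : Tendsto (fun N : ℕ =>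
      (1/(2*(N:ℝ)+1)) * ∑ i ∈ Finset.Icc (-(N:ℤ)) (N:ℤ), a i) atTop (nhds X)) : X = 0 := by
  have := rs_key a a (fun _ => 0) 2 X X 1 0 (by norm_num) (rs_habs a ha) (rs_habs a ha)
    (by intro A B; simp)
    (by
      intro m
      obtain ⟨h1, h2, h3, h4⟩ := hrec m
      rw [h1, h2, h3, h4]; ring)
    hX hX
  linarith

include ha hrec in
private lemma rs_limB (X : ℝ)
    (hX : Tendsto (fun N : ℕ =>
      (1/(2*(N:ℝ)+1)) * ∑ i ∈ Finset.Icc (-(N:ℤ)) (N:ℤ), (-1:ℝ)^i * a i) atTop (nhds X)) :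
    X = 0 := by
  set f : ℤ → ℝ := fun i => (-1:ℝ)^i * a i with hf
  have hfb : ∀ i, |f i| ≤ 1 := fun i =>
    rs_abs_mul_le_one (le_of_eq (rs_zabs i)) (rs_habs a ha i)
  have := rs_key f f (fun _ => 0) 2 X X 1 0 (by norm_num) hfb hfb
    (by intro A B; simp)
    (by
      intro m
      obtain ⟨h1, h2, h3, h4⟩ := hrec m
      rw [hf]
      simp only
      rw [h1, h2, h3, h4, rs_z4, rs_z1, rs_z2, rs_z3]; ring)
    hX hX
  linarith

include ha hrec in
private lemma rs_limD (X : ℝ)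
    (hX : Tendsto (fun N : ℕ =>
      (1/(2*(N:ℝ)+1)) * ∑ i ∈ Finset.Icc (-(N:ℤ)) (N:ℤ), (-1:ℝ)^i * (a i * a (i+1)))
      atTop (nhds X)) : X = 0 := by
  set f : ℤ → ℝ := fun i => (-1:ℝ)^i * (a i * a (i+1)) with hf
  have hfb : ∀ i, |f i| ≤ 1 := fun i =>
    rs_abs_mul_le_one (le_of_eq (rs_zabs i))
      (rs_abs_mul_le_one (rs_habs a ha i) (rs_habs a ha (i+1)))
  have := rs_key f f (fun m => -(-1:ℝ)^m) 1 X X 1 1 (by norm_num) hfb hfb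
    (by
      intro A B
      rw [Finset.sum_neg_distrib, abs_neg]
      exact rs_neg_pow_sum_abs A B)
    (by
      intro m
      obtain ⟨h1, h2, h3, h4⟩ := hrec m
      obtain ⟨g1, _, _, _⟩ := hrec (m+1)
      have h5 : a (4*m+3+1) = a (m+1) := by
        rw [show (4*m+3+1 : ℤ) = 4*(m+1) by ring, g1]
      rw [hf]
      simp only
      rw [show (4*m+1+1 : ℤ) = 4*m+2 by ring, show (4*m+2+1 : ℤ) = 4*m+3 by ring,
        h5, h1, h2, h3, h4, rs_z4, rs_z1, rs_z2, rs_z3]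
      rcases rs_zpm m with hm | hm <;> rcases ha m with hA | hA <;> rw [hm, hA] <;> ring)
    hX hX
  linarith

include ha hrec in
private lemma rs_limC (X Y : ℝ)
    (hX : Tendsto (fun N : ℕ =>
      (1/(2*(N:ℝ)+1)) * ∑ i ∈ Finset.Icc (-(N:ℤ)) (N:ℤ), a i * a (i+1)) atTop (nhds X))
    (hY : Tendsto (fun N : ℕ =>
      (1/(2*(N:ℝ)+1)) * ∑ i ∈ Finset.Icc (-(N:ℤ)) (N:ℤ), (-1:ℝ)^i * (a i * a (i+1)))
      atTop (nhds Y)) : X = 0 := by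
  have hY0 : Y = 0 := rs_limD a ha hrec Y hY
  have := rs_key (fun i => a i * a (i+1)) (fun i => (-1:ℝ)^i * (a i * a (i+1)))
    (fun m => (-1:ℝ)^m) (-1) X Y 1 1 (by norm_num)
    (fun i => rs_abs_mul_le_one (rs_habs a ha i) (rs_habs a ha (i+1)))
    (fun i => rs_abs_mul_le_one (le_of_eq (rs_zabs i))
      (rs_abs_mul_le_one (rs_habs a ha i) (rs_habs a ha (i+1))))
    (fun A B => rs_neg_pow_sum_abs A B)
    (by
      intro m
      obtain ⟨h1, h2, h3, h4⟩ := hrec m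
      obtain ⟨g1, _, _, _⟩ := hrec (m+1)
      have h5 : a (4*m+3+1) = a (m+1) := by
        rw [show (4*m+3+1 : ℤ) = 4*(m+1) by ring, g1]
      rw [show (4*m+1+1 : ℤ) = 4*m+2 by ring, show (4*m+2+1 : ℤ) = 4*m+3 by ring,
        h5, h1, h2, h3, h4]
      rcases rs_zpm m with hm | hm <;> rcases ha m with hA | hA <;> rw [hm, hA] <;> ring)
    hX hY
  rw [hY0] at this
  linarith

end lims

private lemma rs_shift (f : ℤ → ℝ) (hf : ∀ i, |f i| ≤ 1) (X : ℝ)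
    (h : Tendsto (fun N : ℕ =>
      (1/(2*(N:ℝ)+1)) * ∑ i ∈ Finset.Icc (-(N:ℤ)) (N:ℤ), f (i+1)) atTop (nhds X)) :
    Tendsto (fun N : ℕ =>
      (1/(2*(N:ℝ)+1)) * ∑ i ∈ Finset.Icc (-(N:ℤ)) (N:ℤ), f i) atTop (nhds X) := by
  apply rs_tendsto_of_close _ _ X 2 _ h
  intro N
  have hmap : ∑ i ∈ Finset.Icc (-(N:ℤ)) (N:ℤ), f (i+1)
      = ∑ i ∈ Finset.Icc (-(N:ℤ)+1) ((N:ℤ)+1), f i := by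
    rw [← Finset.map_add_right_Icc]
    rw [Finset.sum_map]
    simp [addRightEmbedding]
  have hsplit : ∑ i ∈ Finset.Icc (-(N:ℤ)+1) ((N:ℤ)+1), f i
      = (∑ i ∈ Finset.Icc (-(N:ℤ)) (N:ℤ), f i) - f (-(N:ℤ)) + f ((N:ℤ)+1) := by
    rw [rs_sum_insert_right f (-(N:ℤ)+1) (N:ℤ) (by omega),
      rs_sum_insert_left f (-(N:ℤ)) (N:ℤ) (by omega)]
    ring
  rw [hmap, hsplit]
  have h2 : (0:ℝ) < 2*(N:ℝ)+1 := by positivity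
  rw [show (1/(2*(N:ℝ)+1)) * ((∑ i ∈ Finset.Icc (-(N:ℤ)) (N:ℤ), f i) - f (-(N:ℤ)) + f ((N:ℤ)+1))
      - (1/(2*(N:ℝ)+1)) * ∑ i ∈ Finset.Icc (-(N:ℤ)) (N:ℤ), f i
      = (1/(2*(N:ℝ)+1)) * (f ((N:ℤ)+1) - f (-(N:ℤ))) by ring]
  rw [abs_mul, abs_of_pos (by positivity : (0:ℝ) < 1/(2*(N:ℝ)+1))]
  have hb : |f ((N:ℤ)+1) - f (-(N:ℤ))| ≤ 2 := by
    have := hf ((N:ℤ)+1)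
    have := hf (-(N:ℤ))
    have := abs_sub (f ((N:ℤ)+1)) (f (-(N:ℤ)))
    linarith
  calc (1/(2*(N:ℝ)+1)) * |f ((N:ℤ)+1) - f (-(N:ℤ))| ≤ (1/(2*(N:ℝ)+1)) * 2 := by
        gcongr
    _ = 2 / (2*(N:ℝ)+1) := by ring

private lemma rs_pow_pm (x : ℝ) (hx : x = 1 ∨ x = -1) (p : ℕ) :
    x ^ p = if Even p then 1 else x := by
  rcases hx with h | h <;> subst h
  · simp
  · by_cases hp : Even p
    · rw [if_pos hp, hp.neg_one_pow]
    · rw [if_neg hp, (Nat.odd_iff.mpr (Nat.not_even_iff.mp hp)).neg_one_pow]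

/-- Values of the `n`-point correlation functions of the balanced Rudin–Shapiro
sequence on the vertices of the hypercube `{0,1}^{n-1}`. -/
theorem rudin_shapiro_correlation_hypercube (a : ℤ → ℝ)
    (ha : ∀ i, a i = 1 ∨ a i = -1)
    (hrec : ∀ m : ℤ, a (4 * m) = a m ∧ a (4 * m + 1) = a m ∧
      a (4 * m + 2) = (-1 : ℝ) ^ m * a m ∧ a (4 * m + 3) = -((-1 : ℝ) ^ m) * a m)
    (n : ℕ) (hn : 2 ≤ n)
    (r : Fin (n - 1) → ℤ) (hr : ∀ j, r j = 0 ∨ r j = 1)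
    (L T : ℝ)
    (hL : Tendsto (fun N : ℕ =>
        (1 / (2 * (N : ℝ) + 1)) *
          ∑ i ∈ Finset.Icc (-(N : ℤ)) (N : ℤ), a i * ∏ j, a (i + r j))
      atTop (nhds L))
    (hT : Tendsto (fun N : ℕ =>
        (1 / (2 * (N : ℝ) + 1)) *
          ∑ i ∈ Finset.Icc (-(N : ℤ)) (N : ℤ),
            (-1 : ℝ) ^ i * a i * ∏ j, a (i + r j))
      atTop (nhds T)) :
    L = (if Even n ∧ Even (∑ j, r j) then 1 else 0) ∧ T = 0 := by
  classical
  set K := (Finset.univ.filter (fun j => r j = 1)).card with hK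
  set Z := (Finset.univ.filter (fun j => ¬ r j = 1)).card with hZ
  have hZK : K + Z = n - 1 := by
    rw [hK, hZ, Finset.card_filter_add_card_filter_not]
    simp
  have hsum : (∑ j, r j) = (K : ℤ) := by
    rw [← Finset.sum_filter_add_sum_filter_not Finset.univ (fun j => r j = 1)]
    have h1 : ∑ j ∈ Finset.univ.filter (fun j => r j = 1), r j = (K : ℤ) := by
      rw [Finset.sum_congr rfl (fun j hj => (Finset.mem_filter.mp hj).2)]
      simp [hK, mul_comm]
    have h2 : ∑ j ∈ Finset.univ.filter (fun j => ¬ r j = 1), r j = 0 := by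
      apply Finset.sum_eq_zero
      intro j hj
      rcases hr j with h | h
      · exact h
      · exact absurd h (Finset.mem_filter.mp hj).2
    rw [h1, h2, add_zero]
  have hEsum : Even (∑ j, r j) ↔ Even K := by rw [hsum]; exact Int.even_coe_nat K
  have hnZK : n = Z + 1 + K := by omega
  have hred : ∀ i : ℤ, a i * ∏ j, a (i + r j)
      = (if Even (Z+1) then 1 else a i) * (if Even K then 1 else a (i+1)) := by
    intro i
    have hsplit : ∏ j, a (i + r j)
        = (∏ j ∈ Finset.univ.filter (fun j => r j = 1), a (i + r j))
          * ∏ j ∈ Finset.univ.filter (fun j => ¬ r j = 1), a (i + r j) :=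
      (Finset.prod_filter_mul_prod_filter_not Finset.univ _ _).symm
    have h1 : ∏ j ∈ Finset.univ.filter (fun j => r j = 1), a (i + r j) = a (i+1) ^ K :=
      calc ∏ j ∈ Finset.univ.filter (fun j => r j = 1), a (i + r j)
          = ∏ _j ∈ Finset.univ.filter (fun j => r j = 1), a (i+1) :=
            Finset.prod_congr rfl (fun j hj => by rw [(Finset.mem_filter.mp hj).2])
        _ = a (i+1) ^ K := by rw [Finset.prod_const]
    have h0 : ∏ j ∈ Finset.univ.filter (fun j => ¬ r j = 1), a (i + r j) = a i ^ Z :=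
      calc ∏ j ∈ Finset.univ.filter (fun j => ¬ r j = 1), a (i + r j)
          = ∏ _j ∈ Finset.univ.filter (fun j => ¬ r j = 1), a i :=
            Finset.prod_congr rfl (fun j hj => by
              have h2 := (Finset.mem_filter.mp hj).2
              rcases hr j with h | h
              · rw [h, add_zero]
              · exact absurd h h2)
        _ = a i ^ Z := by rw [Finset.prod_const]
    rw [hsplit, h1, h0, ← rs_pow_pm (a i) (ha i) (Z+1), ← rs_pow_pm (a (i+1)) (ha (i+1)) K]
    ring
  by_cases hE1 : Even (Z+1) <;> by_cases hEK : Even K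
  · -- f = 1 : L = 1, T = 0
    have hcond : Even n ∧ Even (∑ j, r j) := by
      constructor
      · rw [hnZK]; exact hE1.add hEK
      · exact hEsum.mpr hEK
    rw [if_pos hcond]
    have hone : ∀ i : ℤ, a i * ∏ j, a (i + r j) = 1 := fun i => by
      rw [hred i, if_pos hE1, if_pos hEK, mul_one]
    constructor
    · have hL1 : Tendsto (fun N : ℕ =>
          (1/(2*(N:ℝ)+1)) * ∑ i ∈ Finset.Icc (-(N:ℤ)) (N:ℤ), (1:ℝ)) atTop (nhds L) :=
        hL.congr (fun N => by rw [Finset.sum_congr rfl (fun i _ => hone i)])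
      have hconst : (fun N : ℕ =>
          (1/(2*(N:ℝ)+1)) * ∑ i ∈ Finset.Icc (-(N:ℤ)) (N:ℤ), (1:ℝ)) = fun _ => (1:ℝ) := by
        funext N
        rw [Finset.sum_const, nsmul_eq_mul, mul_one, Int.card_Icc,
          show ((N:ℤ) + 1 - (-(N:ℤ))).toNat = 2*N+1 by omega]
        have hpos : (0:ℝ) < 2*(N:ℝ)+1 := by positivity
        push_cast
        field_simp
      rw [hconst] at hL1
      exact tendsto_nhds_unique hL1 tendsto_const_nhds
    · have hT1 : Tendsto (fun N : ℕ =>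
          (1/(2*(N:ℝ)+1)) * ∑ i ∈ Finset.Icc (-(N:ℤ)) (N:ℤ), (-1:ℝ)^i) atTop (nhds T) :=
        hT.congr (fun N => by
          rw [Finset.sum_congr rfl (fun i _ => by rw [mul_assoc, hone i, mul_one])])
      have hz : Tendsto (fun N : ℕ =>
          (1/(2*(N:ℝ)+1)) * ∑ i ∈ Finset.Icc (-(N:ℤ)) (N:ℤ), (-1:ℝ)^i) atTop (nhds 0) := by
        apply rs_tendsto_of_close (fun _ => 0) _ 0 1 _ tendsto_const_nhds
        intro N
        have hpos : (0:ℝ) < 1/(2*(N:ℝ)+1) := by positivity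
        rw [zero_sub, abs_neg, abs_mul, abs_of_pos hpos]
        calc (1/(2*(N:ℝ)+1)) * |∑ i ∈ Finset.Icc (-(N:ℤ)) (N:ℤ), (-1:ℝ)^i|
            ≤ (1/(2*(N:ℝ)+1)) * 1 := by gcongr; exact rs_neg_pow_sum_abs _ _
          _ = 1/(2*(N:ℝ)+1) := by ring
      exact tendsto_nhds_unique hT1 hz
  · -- f = a(i+1) : L = 0, T = 0
    have hcond : ¬ (Even n ∧ Even (∑ j, r j)) := by
      rintro ⟨-, h2⟩
      exact hEK (hEsum.mp h2)
    rw [if_neg hcond]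
    have hfa : ∀ i : ℤ, a i * ∏ j, a (i + r j) = a (i+1) := fun i => by
      rw [hred i, if_pos hE1, if_neg hEK, one_mul]
    constructor
    · have hL1 : Tendsto (fun N : ℕ =>
          (1/(2*(N:ℝ)+1)) * ∑ i ∈ Finset.Icc (-(N:ℤ)) (N:ℤ), a (i+1)) atTop (nhds L) :=
        hL.congr (fun N => by rw [Finset.sum_congr rfl (fun i _ => hfa i)])
      exact rs_limA a ha hrec L (rs_shift a (rs_habs a ha) L hL1)
    · have hT1 : Tendsto (fun N : ℕ =>
          (1/(2*(N:ℝ)+1)) * ∑ i ∈ Finset.Icc (-(N:ℤ)) (N:ℤ), (-1:ℝ)^i * a (i+1))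
          atTop (nhds T) :=
        hT.congr (fun N => by
          rw [Finset.sum_congr rfl (fun i _ => by rw [mul_assoc, hfa i])])
      have hT2 : Tendsto (fun N : ℕ =>
          (1/(2*(N:ℝ)+1)) * ∑ i ∈ Finset.Icc (-(N:ℤ)) (N:ℤ), (-1:ℝ)^(i+1) * a (i+1))
          atTop (nhds (-T)) := by
        have := hT1.neg
        apply this.congr
        intro N
        rw [neg_mul_eq_mul_neg, ← Finset.sum_neg_distrib]
        congr 1
        exact Finset.sum_congr rfl (fun i _ => by
          rw [zpow_add₀ (by norm_num : (-1:ℝ) ≠ 0) i 1, zpow_one]; ring)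
      have hT3 := rs_shift (fun i => (-1:ℝ)^i * a i)
        (fun i => rs_abs_mul_le_one (le_of_eq (rs_zabs i)) (rs_habs a ha i)) (-T) hT2
      have := rs_limB a ha hrec (-T) hT3
      linarith
  · -- f = a(i) : L = 0, T = 0
    have hcond : ¬ (Even n ∧ Even (∑ j, r j)) := by
      rintro ⟨h1, -⟩
      rw [hnZK, Nat.even_add] at h1
      exact hE1 (h1.mpr hEK)
    rw [if_neg hcond]
    have hfa : ∀ i : ℤ, a i * ∏ j, a (i + r j) = a i := fun i => by
      rw [hred i, if_neg hE1, if_pos hEK, mul_one]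
    constructor
    · exact rs_limA a ha hrec L
        (hL.congr (fun N => by rw [Finset.sum_congr rfl (fun i _ => hfa i)]))
    · exact rs_limB a ha hrec T
        (hT.congr (fun N => by
          rw [Finset.sum_congr rfl (fun i _ => by rw [mul_assoc, hfa i])]))
  · -- f = a(i) a(i+1) : L = 0, T = 0
    have hcond : ¬ (Even n ∧ Even (∑ j, r j)) := by
      rintro ⟨-, h2⟩
      exact hEK (hEsum.mp h2)
    rw [if_neg hcond]
    have hfa : ∀ i : ℤ, a i * ∏ j, a (i + r j) = a i * a (i+1) := fun i => by
      rw [hred i, if_neg hE1, if_neg hEK]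
    have hT1 : Tendsto (fun N : ℕ =>
        (1/(2*(N:ℝ)+1)) * ∑ i ∈ Finset.Icc (-(N:ℤ)) (N:ℤ), (-1:ℝ)^i * (a i * a (i+1)))
        atTop (nhds T) :=
      hT.congr (fun N => by
        rw [Finset.sum_congr rfl (fun i _ => by rw [mul_assoc, hfa i])])
    have hL1 : Tendsto (fun N : ℕ =>
        (1/(2*(N:ℝ)+1)) * ∑ i ∈ Finset.Icc (-(N:ℤ)) (N:ℤ), a i * a (i+1))
        atTop (nhds L) :=
      hL.congr (fun N => by rw [Finset.sum_congr rfl (fun i _ => hfa i)])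
    exact ⟨rs_limC a ha hrec L T hL1 hT1, rs_limD a ha hrec T hT1⟩
end

section
/- For the balanced Rudin–Shapiro sequence, η^{(4)}(1, 4ℓ+2, 4ℓ+3) = −1/2 for all ℓ ∈ ℤ. -/
open Filter Finset

private lemma split_sum_Ioc (f : ℤ → ℝ) {a b c : ℤ} (h1 : a ≤ b) (h2 : b ≤ c) :
    ∑ i ∈ Finset.Ioc a c, f i = ∑ i ∈ Finset.Ioc a b, f i + ∑ i ∈ Finset.Ioc b c, f i := by
  rw [← Finset.sum_union (by
    rw [Finset.disjoint_left]
    intro x hx hx'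
    simp only [Finset.mem_Ioc] at hx hx'
    omega), Finset.Ioc_union_Ioc_eq_Ioc h1 h2]

private lemma Icc_eq_Ioc_int (u v : ℤ) : Finset.Icc u v = Finset.Ioc (u - 1) v := by
  ext x
  simp only [Finset.mem_Icc, Finset.mem_Ioc]
  omega

private lemma abs_sum_Ioc_le (f : ℤ → ℝ) (hf : ∀ m, |f m| ≤ 1) (u v : ℤ) {k : ℝ}
    (hk0 : 0 ≤ k) (hk : (v : ℝ) - (u : ℝ) ≤ k) : |∑ i ∈ Finset.Ioc u v, f i| ≤ k := by
  have hcard : (((Finset.Ioc u v).card : ℕ) : ℝ) ≤ k := by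
    rw [Int.card_Ioc]
    rcases le_or_gt (v - u) 0 with h | h
    · rw [Int.toNat_of_nonpos h]
      simpa using hk0
    · have h1 : (((v - u).toNat : ℕ) : ℤ) = v - u := Int.toNat_of_nonneg h.le
      have h2 : (((v - u).toNat : ℕ) : ℝ) = (v : ℝ) - (u : ℝ) := by exact_mod_cast h1
      rw [h2]; exact hk
  calc |∑ i ∈ Finset.Ioc u v, f i| ≤ ∑ i ∈ Finset.Ioc u v, |f i| :=
        Finset.abs_sum_le_sum_abs _ _
    _ ≤ ∑ _i ∈ Finset.Ioc u v, (1 : ℝ) := Finset.sum_le_sum fun i _ => hf i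
    _ = ((Finset.Ioc u v).card : ℝ) := by simp
    _ ≤ k := hcard

private lemma abs_sub_le' (x y : ℝ) : |x - y| ≤ |x| + |y| := by
  rw [sub_eq_add_neg]
  exact (abs_add_le x (-y)).trans (by rw [abs_neg])

private lemma shift_diff_bound (f : ℤ → ℝ) (hf : ∀ m, |f m| ≤ 1) (k : ℤ) (hk : 0 ≤ k)
    (A B : ℤ) :
    |∑ m ∈ Finset.Icc A B, f m - ∑ m ∈ Finset.Icc (A + k) (B + k), f m| ≤ 2 * (k : ℝ) := by
  have hk0 : (0 : ℝ) ≤ (k : ℝ) := by exact_mod_cast hk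
  rcases le_or_gt A B with hAB | hAB
  · rw [Icc_eq_Ioc_int A B, Icc_eq_Ioc_int (A + k) (B + k)]
    rcases le_or_gt (A + k) (B + 1) with h | h
    · rw [split_sum_Ioc f (show A - 1 ≤ A + k - 1 by omega) (show A + k - 1 ≤ B by omega),
        show A + k - 1 = (A + k) - 1 from by ring]
      rw [split_sum_Ioc f (show (A + k) - 1 ≤ B by omega) (show B ≤ B + k by omega)]
      have hX : |∑ i ∈ Finset.Ioc (A - 1) (A + k - 1), f i| ≤ (k : ℝ) := by
        apply abs_sum_Ioc_le f hf _ _ hk0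
        push_cast; linarith
      have hZ : |∑ i ∈ Finset.Ioc B (B + k), f i| ≤ (k : ℝ) := by
        apply abs_sum_Ioc_le f hf _ _ hk0
        push_cast; linarith
      have heq : ∑ i ∈ Finset.Ioc (A - 1) ((A + k) - 1), f i
            + ∑ i ∈ Finset.Ioc ((A + k) - 1) B, f i
            - (∑ i ∈ Finset.Ioc ((A + k) - 1) B, f i + ∑ i ∈ Finset.Ioc B (B + k), f i)
          = ∑ i ∈ Finset.Ioc (A - 1) ((A + k) - 1), f i
            - ∑ i ∈ Finset.Ioc B (B + k), f i := by ring
      rw [heq]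
      have hX' : |∑ i ∈ Finset.Ioc (A - 1) ((A + k) - 1), f i| ≤ (k : ℝ) := by
        rw [show (A + k) - 1 = A + k - 1 from by ring]; exact hX
      calc |∑ i ∈ Finset.Ioc (A - 1) ((A + k) - 1), f i - ∑ i ∈ Finset.Ioc B (B + k), f i|
          ≤ |∑ i ∈ Finset.Ioc (A - 1) ((A + k) - 1), f i| + |∑ i ∈ Finset.Ioc B (B + k), f i| :=
            abs_sub_le' _ _
        _ ≤ 2 * (k : ℝ) := by linarith
    · have h1 : |∑ i ∈ Finset.Ioc (A - 1) B, f i| ≤ (k : ℝ) := by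
        apply abs_sum_Ioc_le f hf _ _ hk0
        have h' : (B : ℤ) - (A - 1) ≤ k := by omega
        exact_mod_cast h'
      have h2 : |∑ i ∈ Finset.Ioc (A + k - 1) (B + k), f i| ≤ (k : ℝ) := by
        apply abs_sum_Ioc_le f hf _ _ hk0
        have h' : (B + k : ℤ) - (A + k - 1) ≤ k := by omega
        exact_mod_cast h'
      calc |∑ i ∈ Finset.Ioc (A - 1) B, f i - ∑ i ∈ Finset.Ioc (A + k - 1) (B + k), f i|
          ≤ |∑ i ∈ Finset.Ioc (A - 1) B, f i| + |∑ i ∈ Finset.Ioc (A + k - 1) (B + k), f i| :=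
            abs_sub_le' _ _
        _ ≤ 2 * (k : ℝ) := by linarith
  · rw [Finset.Icc_eq_empty (by omega : ¬A ≤ B),
      Finset.Icc_eq_empty (by omega : ¬A + k ≤ B + k)]
    simp [hk0]

theorem rudin_shapiro_four_point_minus_half (a : ℤ → ℝ)
    (ha : ∀ i, a i = 1 ∨ a i = -1)
    (hrec : ∀ m : ℤ, a (4 * m) = a m ∧ a (4 * m + 1) = a m ∧
      a (4 * m + 2) = (-1 : ℝ) ^ m * a m ∧ a (4 * m + 3) = -((-1 : ℝ) ^ m) * a m)
    (η θ : ℤ → ℤ → ℤ → ℝ)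
    (hη : ∀ m₁ m₂ m₃ : ℤ, Tendsto (fun N : ℕ =>
        (1 / (2 * (N : ℝ) + 1)) *
          ∑ i ∈ Finset.Icc (-(N : ℤ)) (N : ℤ),
            a i * a (i + m₁) * a (i + m₂) * a (i + m₃))
      atTop (nhds (η m₁ m₂ m₃)))
    (hθ : ∀ m₁ m₂ m₃ : ℤ, Tendsto (fun N : ℕ =>
        (1 / (2 * (N : ℝ) + 1)) *
          ∑ i ∈ Finset.Icc (-(N : ℤ)) (N : ℤ),
            (-1 : ℝ) ^ i * a i * a (i + m₁) * a (i + m₂) * a (i + m₃))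
      atTop (nhds (θ m₁ m₂ m₃)))
    (l : ℤ) :
    η 1 (4 * l + 2) (4 * l + 3) = -(1 / 2) := by
  have hne : (-1 : ℝ) ≠ 0 := by norm_num
  have hpm : ∀ m : ℤ, (-1 : ℝ) ^ m = 1 ∨ (-1 : ℝ) ^ m = -1 := by
    intro m
    rcases Int.even_or_odd m with h | h
    · exact Or.inl (Even.neg_one_zpow h)
    · exact Or.inr (Odd.neg_one_zpow h)
  set g : ℤ → ℝ := fun m => a m * a (m + 1) with hg
  set ε : ℝ := (-1 : ℝ) ^ l with hε
  set c : ℤ → ℝ := fun i => a i * a (i + 1) * a (i + (4 * l + 2)) * a (i + (4 * l + 3)) with hc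
  -- pointwise values of c
  have hc0 : ∀ m : ℤ, c (4 * m) = -1 := by
    intro m
    simp only [hc]
    rw [show 4 * m + (4 * l + 2) = 4 * (m + l) + 2 from by ring,
      show 4 * m + (4 * l + 3) = 4 * (m + l) + 3 from by ring,
      (hrec m).1, (hrec m).2.1, (hrec (m + l)).2.2.1, (hrec (m + l)).2.2.2]
    rcases hpm (m + l) with h | h <;> rcases ha (m + l) with h2 | h2 <;>
      rcases ha m with h3 | h3 <;> rw [h, h2, h3] <;> ring
  have hc1 : ∀ m : ℤ, c (4 * m + 1) = -ε * g (m + l) := by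
    intro m
    simp only [hc, hg, hε]
    rw [show 4 * m + 1 + 1 = 4 * m + 2 from by ring,
      show 4 * m + 1 + (4 * l + 2) = 4 * (m + l) + 3 from by ring,
      show 4 * m + 1 + (4 * l + 3) = 4 * (m + l + 1) from by ring,
      (hrec m).2.1, (hrec m).2.2.1, (hrec (m + l)).2.2.2, (hrec (m + l + 1)).1,
      zpow_add₀ hne m l, show m + l + 1 = (m + l) + 1 from by ring]
    rcases hpm m with h | h <;> rcases ha m with h2 | h2 <;> rw [h, h2] <;> ring
  have hc2 : ∀ m : ℤ, c (4 * m + 2) = -1 := by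
    intro m
    simp only [hc]
    rw [show 4 * m + 2 + 1 = 4 * m + 3 from by ring,
      show 4 * m + 2 + (4 * l + 2) = 4 * (m + l + 1) from by ring,
      show 4 * m + 2 + (4 * l + 3) = 4 * (m + l + 1) + 1 from by ring,
      (hrec m).2.2.1, (hrec m).2.2.2, (hrec (m + l + 1)).1, (hrec (m + l + 1)).2.1]
    rcases hpm m with h | h <;> rcases ha m with h2 | h2 <;>
      rcases ha (m + l + 1) with h3 | h3 <;> rw [h, h2, h3] <;> ring
  have hc3 : ∀ m : ℤ, c (4 * m + 3) = ε * g m := by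
    intro m
    simp only [hc, hg, hε]
    rw [show 4 * m + 3 + 1 = 4 * (m + 1) from by ring,
      show 4 * m + 3 + (4 * l + 2) = 4 * (m + l + 1) + 1 from by ring,
      show 4 * m + 3 + (4 * l + 3) = 4 * (m + l + 1) + 2 from by ring,
      (hrec m).2.2.2, (hrec (m + 1)).1, (hrec (m + l + 1)).2.1, (hrec (m + l + 1)).2.2.1,
      show m + l + 1 = (m + l) + 1 from rfl, zpow_add₀ hne (m + l) 1, zpow_add₀ hne m l,
      zpow_one]
    rcases hpm m with h | h <;> rcases ha (m + l + 1) with h2 | h2 <;> rw [h, h2] <;> ring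
  -- bounds
  have hcbound : ∀ i, |c i| ≤ 1 := by
    intro i
    simp only [hc]
    rcases ha i with h1 | h1 <;> rcases ha (i + 1) with h2 | h2 <;>
      rcases ha (i + (4 * l + 2)) with h3 | h3 <;> rcases ha (i + (4 * l + 3)) with h4 | h4 <;>
      rw [h1, h2, h3, h4] <;> norm_num
  have hgbound : ∀ m, |g m| ≤ 1 := by
    intro m
    simp only [hg]
    rcases ha m with h1 | h1 <;> rcases ha (m + 1) with h2 | h2 <;> rw [h1, h2] <;> norm_num
  have hεabs : |ε| = 1 := by
    rcases hpm l with h | h <;> rw [hε, h] <;> norm_num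
  -- block values
  have hblock : ∀ m : ℤ, (∑ i ∈ Finset.Ioc (4 * m - 1) (4 * m + 3), c i)
      = -2 + ε * (g m - g (m + l)) := by
    intro m
    have hset : Finset.Ioc (4 * m - 1) (4 * m + 3)
        = {4 * m, 4 * m + 1, 4 * m + 2, 4 * m + 3} := by
      ext x
      simp only [Finset.mem_Ioc, Finset.mem_insert, Finset.mem_singleton]
      omega
    rw [hset, Finset.sum_insert (by
        simp only [Finset.mem_insert, Finset.mem_singleton]; omega),
      Finset.sum_insert (by
        simp only [Finset.mem_insert, Finset.mem_singleton]; omega),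
      Finset.sum_insert (by simp only [Finset.mem_singleton]; omega),
      Finset.sum_singleton, hc0 m, hc1 m, hc2 m, hc3 m]
    ring
  -- sum of blocks
  have hblocksN : ∀ (A : ℤ) (n : ℕ),
      ∑ i ∈ Finset.Ioc (4 * A - 1) (4 * (A - 1 + (n : ℤ)) + 3), c i
        = ∑ m ∈ Finset.Icc A (A - 1 + (n : ℤ)), (-2 + ε * (g m - g (m + l))) := by
    intro A n
    induction n with
    | zero =>
        rw [show (4 * (A - 1 + ((0 : ℕ) : ℤ)) + 3 : ℤ) = 4 * A - 1 from by push_cast; ring,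
          Finset.Ioc_self, Finset.Icc_eq_empty (by omega)]
        simp
    | succ n ih =>
        have hM : (A - 1 + (((n : ℕ) + 1 : ℕ) : ℤ)) = (A - 1 + (n : ℤ)) + 1 := by
          push_cast; ring
        rw [hM]
        have hle : A - 1 ≤ A - 1 + (n : ℤ) := by omega
        rw [split_sum_Ioc c (show 4 * A - 1 ≤ 4 * (A - 1 + (n : ℤ)) + 3 by omega)
            (show 4 * (A - 1 + (n : ℤ)) + 3 ≤ 4 * ((A - 1 + (n : ℤ)) + 1) + 3 by omega), ih,
          show (4 * (A - 1 + (n : ℤ)) + 3 : ℤ) = 4 * ((A - 1 + (n : ℤ)) + 1) - 1 from by ring,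
          hblock ((A - 1 + (n : ℤ)) + 1),
          show Finset.Icc A ((A - 1 + (n : ℤ)) + 1)
              = insert ((A - 1 + (n : ℤ)) + 1) (Finset.Icc A (A - 1 + (n : ℤ))) from by
            ext x; simp only [Finset.mem_Icc, Finset.mem_insert]; omega,
          Finset.sum_insert (by simp only [Finset.mem_Icc]; omega)]
        ring
  have hblocks : ∀ A B : ℤ, A - 1 ≤ B →
      ∑ i ∈ Finset.Ioc (4 * A - 1) (4 * B + 3), c i
        = ∑ m ∈ Finset.Icc A B, (-2 + ε * (g m - g (m + l))) := by
    intro A B hAB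
    obtain ⟨n, rfl⟩ : ∃ n : ℕ, B = A - 1 + (n : ℤ) := ⟨(B - (A - 1)).toNat, by omega⟩
    exact hblocksN A n
  -- telescoping
  have hshift : ∀ (k A B : ℤ), ∑ m ∈ Finset.Icc (A + k) (B + k), g m
      = ∑ m ∈ Finset.Icc A B, g (m + k) := by
    intro k A B
    rw [← Finset.map_add_right_Icc A B k, Finset.sum_map]
    rfl
  have htel : ∀ A B : ℤ, ∑ m ∈ Finset.Icc A B, (g m - g (m + l))
      = ∑ m ∈ Finset.Icc A B, g m - ∑ m ∈ Finset.Icc (A + l) (B + l), g m := by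
    intro A B
    rw [Finset.sum_sub_distrib, hshift l A B]
  have hD : ∀ A B : ℤ,
      |∑ m ∈ Finset.Icc A B, g m - ∑ m ∈ Finset.Icc (A + l) (B + l), g m|
        ≤ 2 * |(l : ℝ)| := by
    intro A B
    rcases le_or_gt 0 l with hl | hl
    · have := shift_diff_bound g hgbound l hl A B
      have habs : |(l : ℝ)| = (l : ℝ) := abs_of_nonneg (by exact_mod_cast hl)
      rw [habs]
      exact this
    · have h2 := shift_diff_bound g hgbound (-l) (by omega) (A + l) (B + l)
      rw [show A + l + -l = A from by ring, show B + l + -l = B from by ring,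
        abs_sub_comm] at h2
      have habs : |(l : ℝ)| = ((-l : ℤ) : ℝ) := by
        rw [abs_of_neg (by exact_mod_cast hl)]
        push_cast
        ring
      rw [habs]
      exact h2
  -- main bound
  have hmain : ∀ N : ℕ,
      |(∑ i ∈ Finset.Icc (-(N : ℤ)) (N : ℤ), c i) + (2 * (N : ℝ) + 1) / 2|
        ≤ 2 * |(l : ℝ)| + 20 := by
    intro N
    set K : ℤ := ((N / 4 : ℕ) : ℤ) with hK
    have hK1 : 4 * K ≤ (N : ℤ) := by omega
    have hK2 : (N : ℤ) < 4 * K + 4 := by omega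
    have hK0 : 0 ≤ K := by omega
    set A : ℤ := -K - 1 with hA
    have hsplit : ∑ i ∈ Finset.Ioc (4 * A - 1) (4 * K + 3), c i
        = ∑ i ∈ Finset.Ioc (4 * A - 1) (-(N : ℤ) - 1), c i
          + (∑ i ∈ Finset.Ioc (-(N : ℤ) - 1) (N : ℤ), c i
            + ∑ i ∈ Finset.Ioc (N : ℤ) (4 * K + 3), c i) := by
      rw [split_sum_Ioc c (show 4 * A - 1 ≤ -(N : ℤ) - 1 by omega)
          (show -(N : ℤ) - 1 ≤ 4 * K + 3 by omega),
        split_sum_Ioc c (show -(N : ℤ) - 1 ≤ (N : ℤ) by omega)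
          (show (N : ℤ) ≤ 4 * K + 3 by omega)]
    have hcard : ((Finset.Icc A K).card : ℝ) = 2 * (K : ℝ) + 2 := by
      rw [Int.card_Icc, show K + 1 - A = 2 * K + 2 from by omega]
      have h1 : (((2 * K + 2).toNat : ℕ) : ℤ) = 2 * K + 2 := Int.toNat_of_nonneg (by omega)
      exact_mod_cast h1
    have hAB : ∑ i ∈ Finset.Ioc (4 * A - 1) (4 * K + 3), c i
        = -2 * (2 * (K : ℝ) + 2)
          + ε * (∑ m ∈ Finset.Icc A K, g m - ∑ m ∈ Finset.Icc (A + l) (K + l), g m) := by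
      rw [hblocks A K (by omega), Finset.sum_add_distrib, Finset.sum_const, ← Finset.mul_sum,
        htel A K, nsmul_eq_mul, hcard]
      ring
    have hS : ∑ i ∈ Finset.Icc (-(N : ℤ)) (N : ℤ), c i
        = -2 * (2 * (K : ℝ) + 2)
          + ε * (∑ m ∈ Finset.Icc A K, g m - ∑ m ∈ Finset.Icc (A + l) (K + l), g m)
          - ∑ i ∈ Finset.Ioc (4 * A - 1) (-(N : ℤ) - 1), c i
          - ∑ i ∈ Finset.Ioc (N : ℤ) (4 * K + 3), c i := by
      rw [Icc_eq_Ioc_int]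
      linarith [hsplit, hAB]
    have hE1 : |∑ i ∈ Finset.Ioc (4 * A - 1) (-(N : ℤ) - 1), c i| ≤ (4 : ℝ) := by
      apply abs_sum_Ioc_le c hcbound _ _ (by norm_num)
      have h : (-(N : ℤ) - 1) - (4 * A - 1) ≤ 4 := by omega
      exact_mod_cast h
    have hE2 : |∑ i ∈ Finset.Ioc (N : ℤ) (4 * K + 3), c i| ≤ (3 : ℝ) := by
      apply abs_sum_Ioc_le c hcbound _ _ (by norm_num)
      have h : (4 * K + 3) - (N : ℤ) ≤ 3 := by omega
      exact_mod_cast h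
    have hεD : |ε * (∑ m ∈ Finset.Icc A K, g m - ∑ m ∈ Finset.Icc (A + l) (K + l), g m)|
        ≤ 2 * |(l : ℝ)| := by
      rw [abs_mul, hεabs, one_mul]
      exact hD A K
    have hconst : |(2 * (N : ℝ) + 1) / 2 - 2 * (2 * (K : ℝ) + 2)| ≤ 4 := by
      have c1 : 4 * (K : ℝ) ≤ (N : ℝ) := by exact_mod_cast hK1
      have c2 : (N : ℝ) < 4 * (K : ℝ) + 4 := by exact_mod_cast hK2
      rw [abs_le]
      constructor <;> linarith
    have heq : (∑ i ∈ Finset.Icc (-(N : ℤ)) (N : ℤ), c i) + (2 * (N : ℝ) + 1) / 2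
        = ε * (∑ m ∈ Finset.Icc A K, g m - ∑ m ∈ Finset.Icc (A + l) (K + l), g m)
          - (∑ i ∈ Finset.Ioc (4 * A - 1) (-(N : ℤ) - 1), c i)
          - (∑ i ∈ Finset.Ioc (N : ℤ) (4 * K + 3), c i)
          + ((2 * (N : ℝ) + 1) / 2 - 2 * (2 * (K : ℝ) + 2)) := by
      rw [hS]; ring
    rw [heq]
    have t1 := abs_sub_le'
      (ε * (∑ m ∈ Finset.Icc A K, g m - ∑ m ∈ Finset.Icc (A + l) (K + l), g m))
      (∑ i ∈ Finset.Ioc (4 * A - 1) (-(N : ℤ) - 1), c i)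
    have t2 := abs_sub_le'
      (ε * (∑ m ∈ Finset.Icc A K, g m - ∑ m ∈ Finset.Icc (A + l) (K + l), g m)
        - ∑ i ∈ Finset.Ioc (4 * A - 1) (-(N : ℤ) - 1), c i)
      (∑ i ∈ Finset.Ioc (N : ℤ) (4 * K + 3), c i)
    have t3 := abs_add_le
      (ε * (∑ m ∈ Finset.Icc A K, g m - ∑ m ∈ Finset.Icc (A + l) (K + l), g m)
        - (∑ i ∈ Finset.Ioc (4 * A - 1) (-(N : ℤ) - 1), c i)
        - ∑ i ∈ Finset.Ioc (N : ℤ) (4 * K + 3), c i)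
      ((2 * (N : ℝ) + 1) / 2 - 2 * (2 * (K : ℝ) + 2))
    linarith
  -- the limit
  have key : Tendsto (fun N : ℕ => (1 / (2 * (N : ℝ) + 1)) *
      ∑ i ∈ Finset.Icc (-(N : ℤ)) (N : ℤ),
        a i * a (i + 1) * a (i + (4 * l + 2)) * a (i + (4 * l + 3)))
      atTop (nhds (-(1 / 2))) := by
    have hzero : Tendsto (fun N : ℕ => (1 / (2 * (N : ℝ) + 1)) *
        (∑ i ∈ Finset.Icc (-(N : ℤ)) (N : ℤ), c i) + 1 / 2) atTop (nhds 0) := by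
      rw [tendsto_zero_iff_abs_tendsto_zero]
      have hb : ∀ N : ℕ, |(1 / (2 * (N : ℝ) + 1)) *
          (∑ i ∈ Finset.Icc (-(N : ℤ)) (N : ℤ), c i) + 1 / 2|
          ≤ (2 * |(l : ℝ)| + 20) / (2 * (N : ℝ) + 1) := by
        intro N
        have hpos : (0 : ℝ) < 2 * (N : ℝ) + 1 := by positivity
        have heq : (1 / (2 * (N : ℝ) + 1)) *
            (∑ i ∈ Finset.Icc (-(N : ℤ)) (N : ℤ), c i) + 1 / 2
            = (1 / (2 * (N : ℝ) + 1)) *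
              ((∑ i ∈ Finset.Icc (-(N : ℤ)) (N : ℤ), c i) + (2 * (N : ℝ) + 1) / 2) := by
          field_simp
        rw [heq, abs_mul, abs_of_pos (by positivity : (0 : ℝ) < 1 / (2 * (N : ℝ) + 1))]
        rw [show (1 / (2 * (N : ℝ) + 1)) *
            |∑ i ∈ Finset.Icc (-(N : ℤ)) (N : ℤ), c i + (2 * (N : ℝ) + 1) / 2|
            = |∑ i ∈ Finset.Icc (-(N : ℤ)) (N : ℤ), c i + (2 * (N : ℝ) + 1) / 2|
              / (2 * (N : ℝ) + 1) from by ring]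
        gcongr
        exact hmain N
      have hl2 : Tendsto (fun N : ℕ => (2 * |(l : ℝ)| + 20) / (2 * (N : ℝ) + 1))
          atTop (nhds 0) := by
        apply Tendsto.div_atTop tendsto_const_nhds
        have h1 : Tendsto (fun N : ℕ => (N : ℝ)) atTop atTop := tendsto_natCast_atTop_atTop
        have h2 : Tendsto (fun N : ℕ => 2 * (N : ℝ)) atTop atTop :=
          Tendsto.const_mul_atTop (by norm_num) h1
        exact tendsto_atTop_add_const_right atTop 1 h2
      exact squeeze_zero (fun N => abs_nonneg _) hb hl2
    have h1 := hzero.add_const (-(1 / 2) : ℝ)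
    have h2 : (fun N : ℕ => (1 / (2 * (N : ℝ) + 1)) *
        (∑ i ∈ Finset.Icc (-(N : ℤ)) (N : ℤ), c i) + 1 / 2 + -(1 / 2))
        = fun N : ℕ => (1 / (2 * (N : ℝ) + 1)) *
          ∑ i ∈ Finset.Icc (-(N : ℤ)) (N : ℤ), c i := by
      funext N
      ring
    rw [h2, zero_add] at h1
    simpa only [hc] using h1
  exact tendsto_nhds_unique (hη 1 (4 * l + 2) (4 * l + 3)) key
end
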